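/- arXiv:2502.06005 — 4 statements merged into one kernel-verified Lean document; each statement's English description precedes it below -/
import Mathlib

section
/- Let n ≥ 1 and let C ⊆ 𝔽₃ⁿ be a greedy capset. Then there exists an affine hyperplane H₀ ⊆ 𝔽₃ⁿ with C ∩ H₀ = ∅ such that, for each of the two affine hyperplanes H₁, H₂ parallel to H₀ and for any affine bijection φ : 𝔽₃ⁿ⁻¹ → Hᵢ (i = 1, 2), the preimage φ⁻¹(C ∩ Hᵢ) is a greedy capset in 𝔽₃ⁿ⁻¹. -/
/-- A line in `𝔽₃ⁿ`: a coset of a one-dimensional linear subspace. -/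
def IsLine {n : ℕ} (L : Set (Fin n → ZMod 3)) : Prop :=
  ∃ p v : Fin n → ZMod 3, v ≠ 0 ∧ L = {x | ∃ t : ZMod 3, x = p + t • v}

/-- A capset: a subset of `𝔽₃ⁿ` containing no line. -/
def IsCapset {n : ℕ} (C : Set (Fin n → ZMod 3)) : Prop :=
  ∀ L : Set (Fin n → ZMod 3), IsLine L → ¬ L ⊆ C

/-- `lineDeg S P`: the number of lines through `P` that are contained in `S`. -/
noncomputable def lineDeg {n : ℕ} (S : Set (Fin n → ZMod 3)) (P : Fin n → ZMod 3) : ℕ :=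
  Set.ncard {L : Set (Fin n → ZMod 3) | IsLine L ∧ P ∈ L ∧ L ⊆ S}

/-- The sequence of sets in a greedy construction removing the points `P 0, P 1, …`. -/
def greedySeq {n : ℕ} (P : ℕ → (Fin n → ZMod 3)) : ℕ → Set (Fin n → ZMod 3)
  | 0 => Set.univ
  | (i+1) => greedySeq P i \ {P i}

/-- A greedy capset: a capset obtained from `𝔽₃ⁿ` by successively removing a point whose
number of lines through it contained in the remaining set is positive and maximal,
until the remaining set is a capset. -/
def IsGreedyCapset {n : ℕ} (C : Set (Fin n → ZMod 3)) : Prop :=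
  ∃ (k : ℕ) (P : ℕ → (Fin n → ZMod 3)),
    (∀ i < k, P i ∈ greedySeq P i ∧ 0 < lineDeg (greedySeq P i) (P i) ∧
      ∀ Q ∈ greedySeq P i, lineDeg (greedySeq P i) Q ≤ lineDeg (greedySeq P i) (P i)) ∧
    C = greedySeq P k ∧ IsCapset C

/-- An affine hyperplane in `𝔽₃ⁿ`: the solution set of one nontrivial linear equation. -/
def IsHyperplane {n : ℕ} (H : Set (Fin n → ZMod 3)) : Prop :=
  ∃ (a : Fin n → ZMod 3) (b : ZMod 3), a ≠ 0 ∧ H = {x | ∑ i, a i * x i = b}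

/-- `H₀, H₁, H₂` form a triple of parallel affine hyperplanes partitioning `𝔽₃ⁿ`
(`H₁` and `H₂` are the two hyperplanes parallel to `H₀`). -/
def ParallelTriple {n : ℕ} (H₀ H₁ H₂ : Set (Fin n → ZMod 3)) : Prop :=
  ∃ (a : Fin n → ZMod 3) (b : ZMod 3), a ≠ 0 ∧
    H₀ = {x | ∑ i, a i * x i = b} ∧
    H₁ = {x | ∑ i, a i * x i = b + 1} ∧
    H₂ = {x | ∑ i, a i * x i = b + 2}


/-!
Write `R` for the set of points removed so far. Counting the lines through a point `p ∉ R`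
shows that the greedy rule maximises, among the points not yet removed, the number of lines
through `p` whose two other points are already removed. So when `R` is not an affine subspace
the next point lies in the affine span of `R`, and `R` always sits between an affine subspace
removed earlier and the span of that subspace and one more point. A capset has at most
`2 · 3ⁿ⁻¹` points, so at the end `|R| ≥ 3ⁿ⁻¹`, and this forces some earlier removed set to be
an affine hyperplane `H₀`. From then on a line avoiding `H₀` through a point of a parallel
hyperplane `Hᵢ` lies inside `Hᵢ`, so the degrees of points of `Hᵢ` only see `Hᵢ`, and the
removals inside `Hᵢ` form a greedy construction there.
-/

open Module

namespace AffineSubspace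

variable {K E : Type*} [Field K] [AddCommGroup E] [Module K E] [Module.Finite K E]

theorem ncard_coe_eq_pow_finrank (A : AffineSubspace K E) (hA : (A : Set E).Nonempty) :
    (A : Set E).ncard = Nat.card K ^ finrank K A.direction := by
  obtain ⟨w, hw⟩ := hA
  rw [← Module.natCard_eq_pow_finrank, ← SetLike.coe_sort_coe, Nat.card_coe_set_eq,
    coe_direction_eq_vsub_set_right hw, Set.ncard_image_of_injective _ (vsub_left_injective w)]

theorem card_mul_ncard_le_of_ne_top [Finite K] (A : AffineSubspace K E) (hA : A ≠ ⊤) :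
    Nat.card K * (A : Set E).ncard ≤ Nat.card E := by
  rcases (A : Set E).eq_empty_or_nonempty with h | h
  · simp [h]
  have hlt : finrank K A.direction < finrank K E :=
    Submodule.finrank_lt (by rwa [Ne, direction_eq_top_iff_of_nonempty h])
  rw [A.ncard_coe_eq_pow_finrank h, Module.natCard_eq_pow_finrank (K := K) (V := E), ← pow_succ']
  exact Nat.pow_le_pow_right (Nat.card_pos (α := K)) hlt

theorem ncard_affineSpan_insert_le [Finite K] (A : AffineSubspace K E) (hA : (A : Set E).Nonempty)
    (p : E) :
    (affineSpan K (insert p (A : Set E)) : Set E).ncard ≤ Nat.card K * (A : Set E).ncard := by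
  obtain ⟨w, hw⟩ := hA
  rw [ncard_coe_eq_pow_finrank _ ((affineSpan_nonempty K).mpr (Set.insert_nonempty _ _)),
    A.ncard_coe_eq_pow_finrank ⟨w, hw⟩, ← pow_succ']
  apply Nat.pow_le_pow_right (Nat.card_pos (α := K))
  rw [direction_affineSpan_insert hw]
  calc _ ≤ finrank K (K ∙ (p -ᵥ w)) + finrank K A.direction :=
        Submodule.finrank_add_le_finrank_add_finrank _ _
    _ ≤ 1 + finrank K A.direction := by
        gcongr
        simpa using finrank_span_le_card ({p -ᵥ w} : Set E)
    _ = _ := add_comm _ _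

theorem exists_dual_eq_setOf_of_finrank_add_one (A : AffineSubspace K E)
    (hA : (A : Set E).Nonempty) (h : finrank K A.direction + 1 = finrank K E) :
    ∃ f : Dual K E, f ≠ 0 ∧ ∃ b, (A : Set E) = {x | f x = b} := by
  obtain ⟨w, hw⟩ := hA
  have hlt : A.direction < ⊤ := lt_top_iff_ne_top.mpr fun htop => by
    rw [htop, finrank_top] at h
    omega
  obtain ⟨f, hf, hle⟩ := A.direction.exists_le_ker_of_lt_top hlt
  have hker : A.direction = LinearMap.ker f := Submodule.eq_of_le_of_finrank_eq hle (by
    have := Module.Dual.finrank_ker_add_one_of_ne_zero hf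
    omega)
  refine ⟨f, hf, f w, Set.ext fun x => ?_⟩
  rw [SetLike.mem_coe, ← vsub_right_mem_direction_iff_mem hw, hker, LinearMap.mem_ker,
    vsub_eq_sub, map_sub, sub_eq_zero]
  rfl

end AffineSubspace

local notation "𝔽₃^" n:max => Fin n → ZMod 3

section CharThree

variable {E : Type*} [AddCommGroup E] [Module (ZMod 3) E]

theorem three_nsmul_eq_zero (x : E) : 3 • x = 0 := by
  rw [← Nat.cast_smul_eq_nsmul (ZMod 3), ZMod.natCast_self, zero_smul]

theorem eq_zero_or_eq_one_or_eq_two (t : ZMod 3) : t = 0 ∨ t = 1 ∨ t = 2 := by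
  decide +revert

theorem two_smul_eq_neg (x : E) : (2 : ZMod 3) • x = -x := by
  rw [show (2 : ZMod 3) = -1 from rfl, neg_one_smul]

theorem neg_ne_self_of_ne_zero {x : E} (hx : x ≠ 0) : -x ≠ x := by
  intro h
  apply hx
  linear_combination (norm := module) h + three_nsmul_eq_zero x

/-- Over `𝔽₃` the line through `p ≠ q` is `{p, q, -(p + q)}`, so this says that `s` contains
every line through two of its points. -/
def IsLineClosed (s : Set E) : Prop :=
  ∀ p ∈ s, ∀ q ∈ s, -(p + q) ∈ s

theorem isLineClosed_coe (A : AffineSubspace (ZMod 3) E) : IsLineClosed (A : Set E) := by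
  intro p hp q hq
  have h : -(p + q) = (2 : ZMod 3) • (p -ᵥ q) +ᵥ q := by
    rw [vsub_eq_sub, vadd_eq_add]
    linear_combination (norm := module) -three_nsmul_eq_zero p
  rw [h]
  exact A.smul_vsub_vadd_mem 2 hp hq hq

theorem isLineClosed_of_subsingleton {s : Set E} (hs : s.Subsingleton) : IsLineClosed s := by
  intro p hp q hq
  have h : -(p + p) = p := by linear_combination (norm := module) -three_nsmul_eq_zero p
  rwa [hs hq hp, h]

theorem IsLineClosed.coe_affineSpan {s : Set E} (hs : IsLineClosed s) :
    (affineSpan (ZMod 3) s : Set E) = s := by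
  let A : AffineSubspace (ZMod 3) E :=
    { carrier := s
      smul_vsub_vadd_mem' := by
        intro c p₁ p₂ p₃ h₁ h₂ h₃
        rw [vsub_eq_sub, vadd_eq_add]
        obtain rfl | rfl | rfl := eq_zero_or_eq_one_or_eq_two c
        · simpa using h₃
        · convert hs _ (hs _ h₁ _ h₃) _ h₂ using 1
          module
        · convert hs _ (hs _ h₂ _ h₃) _ h₁ using 1
          linear_combination (norm := module) three_nsmul_eq_zero p₁ - three_nsmul_eq_zero p₂ }
  exact Set.Subset.antisymm
    (SetLike.coe_subset_coe.mpr (affineSpan_le.mpr subset_rfl : affineSpan (ZMod 3) s ≤ A))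
    (subset_affineSpan _ _)

end CharThree

variable {n m : ℕ}

def lineThrough (p v : 𝔽₃^n) : Set (𝔽₃^n) :=
  {x | ∃ t : ZMod 3, x = p + t • v}

theorem mem_lineThrough_self (p v : 𝔽₃^n) : p ∈ lineThrough p v :=
  ⟨0, by simp⟩

theorem add_mem_lineThrough (p v : 𝔽₃^n) : p + v ∈ lineThrough p v :=
  ⟨1, by simp⟩

theorem lineThrough_eq_of_mem {p q v : 𝔽₃^n} (h : q ∈ lineThrough p v) :
    lineThrough p v = lineThrough q v := by
  obtain ⟨s, rfl⟩ := h
  ext x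
  constructor
  · rintro ⟨t, rfl⟩
    exact ⟨t - s, by module⟩
  · rintro ⟨t, rfl⟩
    exact ⟨s + t, by module⟩

theorem IsLine.exists_eq_lineThrough {L : Set (𝔽₃^n)} {q : 𝔽₃^n} (hL : IsLine L) (hq : q ∈ L) :
    ∃ v ≠ 0, L = lineThrough q v := by
  obtain ⟨p, v, hv, rfl⟩ := hL
  exact ⟨v, hv, lineThrough_eq_of_mem hq⟩

theorem lineThrough_subset_iff {p v : 𝔽₃^n} {S : Set (𝔽₃^n)} :
    lineThrough p v ⊆ S ↔ p ∈ S ∧ p + v ∈ S ∧ p - v ∈ S := by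
  constructor
  · intro h
    exact ⟨h (mem_lineThrough_self p v), h (add_mem_lineThrough p v),
      h ⟨2, by rw [two_smul_eq_neg, sub_eq_add_neg]⟩⟩
  · rintro ⟨h₀, h₁, h₂⟩ x ⟨t, rfl⟩
    obtain rfl | rfl | rfl := eq_zero_or_eq_one_or_eq_two t
    · simpa using h₀
    · simpa using h₁
    · rwa [two_smul_eq_neg, ← sub_eq_add_neg]

theorem lineThrough_neg (p v : 𝔽₃^n) : lineThrough p (-v) = lineThrough p v := by
  ext x
  constructor
  · rintro ⟨t, rfl⟩
    exact ⟨-t, by simp⟩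
  · rintro ⟨t, rfl⟩
    exact ⟨-t, by simp⟩

theorem lineThrough_eq_lineThrough_iff {p v w : 𝔽₃^n} (hw : w ≠ 0) :
    lineThrough p w = lineThrough p v ↔ w = v ∨ w = -v := by
  constructor
  · intro h
    obtain ⟨t, ht⟩ : p + w ∈ lineThrough p v := h ▸ add_mem_lineThrough p w
    rw [add_left_cancel ht] at hw ⊢
    obtain rfl | rfl | rfl := eq_zero_or_eq_one_or_eq_two t
    · simp at hw
    · simp
    · simp [two_smul_eq_neg]
  · rintro (rfl | rfl)
    · rfl
    · exact lineThrough_neg p v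

theorem image_lineThrough (φ : 𝔽₃^m →ᵃ[ZMod 3] 𝔽₃^n) (p v : 𝔽₃^m) :
    φ '' lineThrough p v = lineThrough (φ p) (φ.linear v) := by
  have hφ (t : ZMod 3) : φ (p + t • v) = φ p + t • φ.linear v := by
    rw [add_comm p, ← vadd_eq_add, AffineMap.map_vadd, vadd_eq_add, add_comm, map_smul]
  ext y
  constructor
  · rintro ⟨x, ⟨t, rfl⟩, rfl⟩
    exact ⟨t, hφ t⟩
  · rintro ⟨t, rfl⟩
    exact ⟨p + t • v, ⟨t, rfl⟩, hφ t⟩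

section AffineMap

variable {φ : 𝔽₃^m →ᵃ[ZMod 3] 𝔽₃^n} (hφ : Function.Injective φ)
include hφ

theorem IsLine.image {L : Set (𝔽₃^m)} (hL : IsLine L) : IsLine (φ '' L) := by
  obtain ⟨p, v, hv, rfl⟩ := hL
  refine ⟨φ p, φ.linear v, fun h => hv ?_, image_lineThrough φ p v⟩
  exact (φ.linear_injective_iff.mpr hφ) (h.trans (map_zero _).symm)

theorem IsLine.preimage {L : Set (𝔽₃^n)} (hL : IsLine L) (hLφ : L ⊆ Set.range φ) :
    IsLine (φ ⁻¹' L) := by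
  obtain ⟨p, v, hv, rfl⟩ := hL
  obtain ⟨p', hp'⟩ := hLφ (mem_lineThrough_self p v)
  obtain ⟨q', hq'⟩ := hLφ (add_mem_lineThrough p v)
  have hlin : φ.linear (q' - p') = v := by
    rw [← vsub_eq_sub, AffineMap.linearMap_vsub, hq', hp', vsub_eq_sub, add_sub_cancel_left]
  refine ⟨p', q' - p', fun h => hv (by rw [← hlin, h, map_zero]), ?_⟩
  change φ ⁻¹' lineThrough p v = lineThrough p' (q' - p')
  rw [← hp', ← hlin, ← image_lineThrough, Set.preimage_image_eq _ hφ]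

theorem IsCapset.preimage {C : Set (𝔽₃^n)} (hC : IsCapset C) : IsCapset (φ ⁻¹' C) :=
  fun _ hL hLC => hC _ (hL.image hφ) (Set.image_subset_iff.mpr hLC)

theorem lineDeg_preimage {S : Set (𝔽₃^n)} {z : 𝔽₃^m}
    (hconf : ∀ L, IsLine L → φ z ∈ L → L ⊆ S → L ⊆ Set.range φ) :
    lineDeg (φ ⁻¹' S) z = lineDeg S (φ z) := by
  have hlines : {L | IsLine L ∧ φ z ∈ L ∧ L ⊆ S} =
      (φ '' ·) '' {L | IsLine L ∧ z ∈ L ∧ L ⊆ φ ⁻¹' S} := by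
    ext L
    constructor
    · rintro ⟨hL, hzL, hLS⟩
      have hLφ := hconf L hL hzL hLS
      exact ⟨φ ⁻¹' L, ⟨hL.preimage hφ hLφ, hzL, Set.preimage_mono hLS⟩,
        Set.image_preimage_eq_of_subset hLφ⟩
    · rintro ⟨L', ⟨hL', hzL', hL'S⟩, rfl⟩
      exact ⟨hL'.image hφ, Set.mem_image_of_mem φ hzL', Set.image_subset_iff.mpr hL'S⟩
  rw [lineDeg, lineDeg, hlines, Set.ncard_image_of_injective _ (Set.image_injective.mpr hφ)]

end AffineMap

theorem IsLine.subset_of_dotProduct_ne {L : Set (𝔽₃^n)} {a : 𝔽₃^n} {b c : ZMod 3} (hL : IsLine L)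
    (hLb : L ⊆ {x | a ⬝ᵥ x = b}ᶜ) (hLc : (L ∩ {x | a ⬝ᵥ x = c}).Nonempty) :
    L ⊆ {x | a ⬝ᵥ x = c} := by
  obtain ⟨x, hxL, hxc⟩ := hLc
  obtain ⟨v, -, rfl⟩ := hL.exists_eq_lineThrough hxL
  have hav : a ⬝ᵥ v = 0 := by
    by_contra h
    refine hLb ⟨(b - c) / a ⬝ᵥ v, rfl⟩ ?_
    change a ⬝ᵥ x = c at hxc
    simp only [Set.mem_ofPred_eq, dotProduct_add, dotProduct_smul, smul_eq_mul, hxc,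
      div_mul_cancel₀ _ h, add_sub_cancel]
  rintro y ⟨t, rfl⟩
  simpa [dotProduct_add, dotProduct_smul, hav] using hxc

theorem natCard_fin_zmod_three (n : ℕ) : Nat.card (𝔽₃^n) = 3 ^ n := by
  simp

theorem two_mul_lineDeg {S : Set (𝔽₃^n)} {p : 𝔽₃^n} (hp : p ∈ S) :
    2 * lineDeg S p = {v | v ≠ 0 ∧ p + v ∈ S ∧ p - v ∈ S}.ncard := by
  classical
  set D := Finset.univ.filter fun v : 𝔽₃^n => v ≠ 0 ∧ lineThrough p v ⊆ S
  have hlines : {L | IsLine L ∧ p ∈ L ∧ L ⊆ S} = ↑(D.image (lineThrough p)) := by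
    ext L
    simp only [Finset.coe_image, Finset.coe_filter, D, Finset.mem_univ, true_and]
    constructor
    · rintro ⟨hL, hpL, hLS⟩
      obtain ⟨v, hv, rfl⟩ := hL.exists_eq_lineThrough hpL
      exact ⟨v, ⟨hv, hLS⟩, rfl⟩
    · rintro ⟨v, ⟨hv, hvS⟩, rfl⟩
      exact ⟨⟨p, v, hv, rfl⟩, mem_lineThrough_self p v, hvS⟩
  have hfiber : ∀ L ∈ D.image (lineThrough p), (D.filter (lineThrough p · = L)).card = 2 := by
    simp only [Finset.forall_mem_image]
    intro v hv
    simp only [D, Finset.mem_filter, Finset.mem_univ, true_and] at hv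
    have : D.filter (lineThrough p · = lineThrough p v) = {v, -v} := by
      ext w
      simp only [D, Finset.mem_filter, Finset.mem_univ, true_and, Finset.mem_insert,
        Finset.mem_singleton]
      constructor
      · rintro ⟨⟨hw, -⟩, hwv⟩
        exact (lineThrough_eq_lineThrough_iff hw).mp hwv
      · rintro (rfl | rfl)
        · exact ⟨hv, rfl⟩
        · rw [lineThrough_neg]
          exact ⟨⟨neg_ne_zero.mpr hv.1, hv.2⟩, rfl⟩
    rw [this, Finset.card_pair (neg_ne_self_of_ne_zero hv.1).symm]
  have hD : D.card = 2 * (D.image (lineThrough p)).card :=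
    le_antisymm (Finset.card_le_mul_card_image _ _ fun L hL => (hfiber L hL).le)
      (Finset.mul_card_image_le_card _ _ fun L hL => (hfiber L hL).ge)
  rw [lineDeg, hlines, Set.ncard_coe_finset, ← hD, ← Set.ncard_coe_finset]
  congr 1
  ext v
  simp [D, lineThrough_subset_iff, hp]

def centreDirs (R : Set (𝔽₃^n)) (p : 𝔽₃^n) : Set (𝔽₃^n) :=
  {v | p + v ∈ R ∧ p - v ∈ R}

theorem two_mul_lineDeg_compl_add {R : Set (𝔽₃^n)} {p : 𝔽₃^n} (hp : p ∉ R) :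
    2 * lineDeg Rᶜ p + 1 + 2 * R.ncard = 3 ^ n + (centreDirs R p).ncard := by
  set A := {v | p + v ∈ R}
  set B := {v | p - v ∈ R}
  have hA : A.ncard = R.ncard := Set.ncard_preimage_of_injective_subset_range
    (add_right_injective p) fun x _ => ⟨x - p, add_sub_cancel p x⟩
  have hB : B.ncard = R.ncard := Set.ncard_preimage_of_injective_subset_range
    sub_right_injective fun x _ => ⟨p - x, sub_sub_cancel p x⟩
  have hcompl : (A ∪ B)ᶜ = insert 0 {v | v ≠ 0 ∧ p + v ∈ Rᶜ ∧ p - v ∈ Rᶜ} := by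
    ext v
    by_cases hv : v = 0 <;> simp [A, B, hv, hp]
  have hunion := Set.ncard_union_add_ncard_inter A B
  have hcard := Set.ncard_add_ncard_compl (A ∪ B)
  rw [hcompl, Set.ncard_insert_of_notMem (by simp), ← two_mul_lineDeg (Set.mem_compl hp),
    natCard_fin_zmod_three] at hcard
  change _ = _ + (A ∩ B).ncard
  omega

theorem IsCapset.three_mul_ncard_le {C : Set (𝔽₃^n)} (hC : IsCapset C) (hn : 1 ≤ n) :
    3 * C.ncard ≤ 2 * 3 ^ n := by
  classical
  obtain ⟨v, hv⟩ : ∃ v : 𝔽₃^n, v ≠ 0 := ⟨Pi.single ⟨0, hn⟩ 1, by simp⟩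
  have htranslate (t : ZMod 3) : (Finset.univ.filter fun x => x + t • v ∈ C).card = C.ncard := by
    rw [← Set.ncard_coe_finset, Finset.coe_filter]
    simp only [Finset.mem_univ, true_and]
    exact Set.ncard_preimage_of_injective_subset_range (add_left_injective _)
      fun x _ => ⟨x - t • v, sub_add_cancel x _⟩
  have hfiber (x : 𝔽₃^n) : (Finset.univ.filter fun t : ZMod 3 => x + t • v ∈ C).card ≤ 2 := by
    by_contra! h
    have hall : Finset.univ.filter (fun t : ZMod 3 => x + t • v ∈ C) = Finset.univ :=
      Finset.eq_univ_of_card _ (le_antisymm (Finset.card_le_univ _) h)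
    refine hC _ ⟨x, v, hv, rfl⟩ ?_
    rintro y ⟨t, rfl⟩
    simpa using Finset.ext_iff.mp hall t
  calc 3 * C.ncard = ∑ t : ZMod 3, (Finset.univ.filter fun x => x + t • v ∈ C).card := by
        simp [htranslate]
    _ = ∑ x : 𝔽₃^n, (Finset.univ.filter fun t : ZMod 3 => x + t • v ∈ C).card := by
        simp only [Finset.card_filter]
        exact Finset.sum_comm
    _ ≤ ∑ _x : 𝔽₃^n, 2 := Finset.sum_le_sum fun x _ => hfiber x
    _ = 2 * 3 ^ n := by simp [mul_comm]

theorem IsLineClosed.isHyperplane {R : Set (𝔽₃^n)} (hR : IsLineClosed R) (hne : R ≠ Set.univ)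
    (hcard : 3 ^ n ≤ 3 * R.ncard) : IsHyperplane R := by
  set A := affineSpan (ZMod 3) R
  have hAR : (A : Set (𝔽₃^n)) = R := hR.coe_affineSpan
  have hRne : R.Nonempty := Set.nonempty_of_ncard_ne_zero fun h => by
    rw [h, mul_zero] at hcard
    exact (pow_pos (by norm_num) n).ne' (Nat.le_zero.mp hcard)
  have hAne : (A : Set (𝔽₃^n)).Nonempty := hAR ▸ hRne
  have hle := A.card_mul_ncard_le_of_ne_top fun h => hne (by rw [← hAR, h, AffineSubspace.top_coe])
  have hpow := A.ncard_coe_eq_pow_finrank hAne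
  rw [hAR, Nat.card_zmod, natCard_fin_zmod_three] at hle
  rw [hAR, Nat.card_zmod] at hpow
  have hd : finrank (ZMod 3) A.direction + 1 = finrank (ZMod 3) (𝔽₃^n) := by
    rw [Module.finrank_fin_fun]
    refine Nat.pow_right_injective (by norm_num : 2 ≤ 3) (?_ : 3 ^ _ = 3 ^ n)
    rw [pow_succ]
    omega
  obtain ⟨f, hf, b, hfb⟩ := A.exists_dual_eq_setOf_of_finrank_add_one hAne hd
  refine ⟨(dotProductEquiv (ZMod 3) (Fin n)).symm f, b, by simpa using hf, ?_⟩
  rw [← hAR, hfb]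
  ext x
  change f x = b ↔ (dotProductEquiv (ZMod 3) (Fin n)).symm f ⬝ᵥ x = b
  rw [← dotProductEquiv_apply_apply, LinearEquiv.apply_symm_apply]

def IsGreedyStep (S : Set (𝔽₃^n)) (p : 𝔽₃^n) : Prop :=
  p ∈ S ∧ 0 < lineDeg S p ∧ ∀ q ∈ S, lineDeg S q ≤ lineDeg S p

theorem exists_mem_ne_of_lineDeg_pos {S : Set (𝔽₃^n)} {p : 𝔽₃^n} (h : 0 < lineDeg S p) :
    ∃ q ∈ S, q ≠ p := by
  obtain ⟨L, hL, hpL, hLS⟩ := Set.nonempty_of_ncard_ne_zero h.ne'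
  obtain ⟨v, hv, rfl⟩ := hL.exists_eq_lineThrough hpL
  exact ⟨p + v, hLS (add_mem_lineThrough p v), by simpa using hv⟩

/-- If the removed set `Sᶜ` is not an affine subspace, some line through a point of `S` has its
two other points removed, so the greedy point has such a line as well and lies in the affine
span of `Sᶜ`. -/
theorem IsGreedyStep.mem_affineSpan {S : Set (𝔽₃^n)} {p : 𝔽₃^n} (h : IsGreedyStep S p)
    (hS : ¬ IsLineClosed Sᶜ) : p ∈ affineSpan (ZMod 3) Sᶜ := by
  obtain ⟨q, hq, r, hr, hqr⟩ : ∃ q ∈ Sᶜ, ∃ r ∈ Sᶜ, -(q + r) ∉ Sᶜ := by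
    simpa [IsLineClosed] using hS
  have hy : (centreDirs Sᶜ (-(q + r))).Nonempty := by
    refine ⟨q - -(q + r), ?_, ?_⟩
    · simpa using hq
    · convert hr using 1
      linear_combination (norm := module) -three_nsmul_eq_zero q - three_nsmul_eq_zero r
  have hle : (centreDirs Sᶜ (-(q + r))).ncard ≤ (centreDirs Sᶜ p).ncard := by
    have hcount_y := two_mul_lineDeg_compl_add hqr
    have hcount_p := two_mul_lineDeg_compl_add (Set.notMem_compl_iff.mpr h.1)
    have hmax := h.2.2 _ (Set.notMem_compl_iff.mp hqr)
    rw [compl_compl] at hcount_y hcount_p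
    omega
  obtain ⟨v, hv₁, hv₂⟩ := Set.nonempty_of_ncard_ne_zero
    ((Set.ncard_pos (Set.toFinite _)).mpr hy |>.trans_le hle).ne'
  have hp : -(p + v + (p - v)) = p := by
    linear_combination (norm := module) -three_nsmul_eq_zero p
  have := isLineClosed_coe (affineSpan (ZMod 3) Sᶜ) _ (subset_affineSpan _ _ hv₁) _
    (subset_affineSpan _ _ hv₂)
  rwa [hp] at this

section GreedyRun

variable {P : ℕ → 𝔽₃^n} {k : ℕ}

theorem compl_greedySeq_succ (P : ℕ → 𝔽₃^n) (i : ℕ) :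
    (greedySeq P (i + 1))ᶜ = insert (P i) (greedySeq P i)ᶜ := by
  ext x
  simp only [greedySeq, Set.compl_sdiff, Set.mem_union, Set.mem_compl_iff, Set.mem_insert_iff,
    Set.mem_singleton_iff]

theorem greedySeq_antitone (P : ℕ → 𝔽₃^n) : Antitone (greedySeq P) :=
  antitone_nat_of_succ_le fun _ => Set.sdiff_subset

theorem greedySeq_nonempty (hrun : ∀ i < k, IsGreedyStep (greedySeq P i) (P i)) :
    (greedySeq P k).Nonempty := by
  cases k with
  | zero => exact Set.univ_nonempty
  | succ k =>
    obtain ⟨q, hq, hqP⟩ := exists_mem_ne_of_lineDeg_pos (hrun k k.lt_succ_self).2.1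
    exact ⟨q, hq, hqP⟩

theorem exists_compl_greedySeq_subset_affineSpan_insert
    (hrun : ∀ i < k, IsGreedyStep (greedySeq P i) (P i)) :
    ∀ i ≤ k, ∃ j ≤ i, IsLineClosed (greedySeq P j)ᶜ ∧
      ∃ p, (greedySeq P i)ᶜ ⊆ affineSpan (ZMod 3) (insert p (greedySeq P j)ᶜ) := by
  intro i hi
  induction i with
  | zero =>
    refine ⟨0, le_rfl, isLineClosed_of_subsingleton ?_, 0, by simp [greedySeq]⟩
    simp [greedySeq]
  | succ i ih =>
    obtain ⟨j, hji, hj, p, hsub⟩ := ih (by omega)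
    rw [compl_greedySeq_succ]
    by_cases hi' : IsLineClosed (greedySeq P i)ᶜ
    · exact ⟨i, by omega, hi', P i, subset_affineSpan _ _⟩
    · refine ⟨j, by omega, hj, p, Set.insert_subset ?_ hsub⟩
      exact affineSpan_le.mpr hsub ((hrun i (by omega)).mem_affineSpan hi')

theorem isHyperplane_or_of_subset_affineSpan_insert {R R' : Set (𝔽₃^n)} {p : 𝔽₃^n} (hRR' : R ⊆ R')
    (hR : IsLineClosed R) (hR' : R' ⊆ affineSpan (ZMod 3) (insert p R)) (hne : R' ≠ Set.univ)
    (hcard : 3 ^ n ≤ 3 * R'.ncard) : IsHyperplane R ∨ IsHyperplane R' := by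
  by_cases hR'closed : IsLineClosed R'
  · exact Or.inr (hR'closed.isHyperplane hne hcard)
  left
  have hRne : R.Nonempty := by
    rw [Set.nonempty_iff_ne_empty]
    rintro rfl
    rw [LawfulSingleton.insert_empty_eq, AffineSubspace.coe_affineSpan_singleton] at hR'
    exact hR'closed (isLineClosed_of_subsingleton (Set.subsingleton_singleton.anti hR'))
  set B := affineSpan (ZMod 3) (insert p R)
  have hlt : R'.ncard < (B : Set (𝔽₃^n)).ncard :=
    Set.ncard_lt_ncard (hR'.ssubset_of_ne fun h => hR'closed (h ▸ isLineClosed_coe B))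
  have hB : (B : Set (𝔽₃^n)) = Set.univ := by
    by_contra hB
    have := B.card_mul_ncard_le_of_ne_top fun h => hB (by rw [h, AffineSubspace.top_coe])
    rw [Nat.card_zmod, natCard_fin_zmod_three] at this
    omega
  have hspan := (affineSpan (ZMod 3) R).ncard_affineSpan_insert_le (by rwa [hR.coe_affineSpan]) p
  rw [hR.coe_affineSpan, hB, Set.ncard_univ, natCard_fin_zmod_three, Nat.card_zmod] at hspan
  exact hR.isHyperplane (fun h => hne (Set.eq_univ_of_univ_subset (h ▸ hRR'))) hspan

theorem exists_compl_greedySeq_isHyperplane (hn : 1 ≤ n)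
    (hrun : ∀ i < k, IsGreedyStep (greedySeq P i) (P i)) (hcap : IsCapset (greedySeq P k)) :
    ∃ j ≤ k, IsHyperplane (greedySeq P j)ᶜ := by
  obtain ⟨j, hjk, hj, p, hsub⟩ := exists_compl_greedySeq_subset_affineSpan_insert hrun k le_rfl
  have hcard : 3 ^ n ≤ 3 * (greedySeq P k)ᶜ.ncard := by
    have hC := hcap.three_mul_ncard_le hn
    have hsum := Set.ncard_add_ncard_compl (greedySeq P k)
    rw [natCard_fin_zmod_three] at hsum
    omega
  rcases isHyperplane_or_of_subset_affineSpan_insert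
    (Set.compl_subset_compl.mpr (greedySeq_antitone P hjk)) hj hsub
    (Set.compl_ne_univ.mpr (greedySeq_nonempty hrun)) hcard with h | h
  · exact ⟨j, hjk, h⟩
  · exact ⟨k, le_rfl, h⟩

end GreedyRun

inductive IsGreedyReachable {n : ℕ} : Set (𝔽₃^n) → Prop
  | univ : IsGreedyReachable Set.univ
  | diff_singleton {S : Set (𝔽₃^n)} {p : 𝔽₃^n} :
      IsGreedyReachable S → IsGreedyStep S p → IsGreedyReachable (S \ {p})

theorem greedySeq_update_of_le (P : ℕ → 𝔽₃^n) {k i : ℕ} (q : 𝔽₃^n) (hi : i ≤ k) :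
    greedySeq (Function.update P k q) i = greedySeq P i := by
  induction i with
  | zero => rfl
  | succ i ih =>
    simp only [greedySeq]
    rw [ih (by omega), Function.update_of_ne (by omega)]

theorem IsGreedyReachable.exists_greedySeq {S : Set (𝔽₃^n)} (h : IsGreedyReachable S) :
    ∃ (k : ℕ) (P : ℕ → 𝔽₃^n), (∀ i < k, IsGreedyStep (greedySeq P i) (P i)) ∧
      S = greedySeq P k := by
  induction h with
  | univ => exact ⟨0, fun _ => 0, by simp, rfl⟩
  | @diff_singleton S p _ hstep ih =>
    obtain ⟨k, P, hrun, rfl⟩ := ih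
    refine ⟨k + 1, Function.update P k p, fun i hi => ?_, ?_⟩
    · rcases Nat.lt_succ_iff_lt_or_eq.mp hi with hi | rfl
      · rw [greedySeq_update_of_le P p hi.le, Function.update_of_ne hi.ne]
        exact hrun i hi
      · rwa [greedySeq_update_of_le P p le_rfl, Function.update_self]
    · change _ = greedySeq _ k \ {Function.update P k p k}
      rw [greedySeq_update_of_le P p le_rfl, Function.update_self]

theorem IsGreedyReachable.isGreedyCapset {C : Set (𝔽₃^n)} (h : IsGreedyReachable C)
    (hC : IsCapset C) : IsGreedyCapset C := by
  obtain ⟨k, P, hrun, rfl⟩ := h.exists_greedySeq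
  exact ⟨k, P, hrun, rfl, hC⟩

theorem IsGreedyStep.preimage {φ : 𝔽₃^m → 𝔽₃^n} {S : Set (𝔽₃^n)} {y : 𝔽₃^m}
    (h : IsGreedyStep S (φ y)) (hdeg : ∀ z, lineDeg (φ ⁻¹' S) z = lineDeg S (φ z)) :
    IsGreedyStep (φ ⁻¹' S) y :=
  ⟨h.1, hdeg y ▸ h.2.1, fun z hz => by
    rw [hdeg, hdeg]
    exact h.2.2 _ hz⟩

theorem isGreedyReachable_preimage_greedySeq {P : ℕ → 𝔽₃^n} {j k : ℕ}
    (hrun : ∀ i < k, IsGreedyStep (greedySeq P i) (P i)) (hjk : j ≤ k)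
    {φ : 𝔽₃^m →ᵃ[ZMod 3] 𝔽₃^n} (hφ : Function.Injective φ)
    (hφS : Set.range φ ⊆ greedySeq P j)
    (hconf : ∀ L, IsLine L → L ⊆ greedySeq P j → (L ∩ Set.range φ).Nonempty →
      L ⊆ Set.range φ) :
    IsGreedyReachable (φ ⁻¹' greedySeq P k) := by
  induction k, hjk using Nat.le_induction with
  | base =>
    rw [Set.preimage_eq_univ_iff.mpr hφS]
    exact .univ
  | succ k hjk ih =>
    have hS := ih fun i hi => hrun i (by omega)
    change IsGreedyReachable (φ ⁻¹' (greedySeq P k \ {P k}))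
    rw [Set.preimage_sdiff]
    by_cases hPk : P k ∈ Set.range φ
    · obtain ⟨y, hy⟩ := hPk
      have hpre : φ ⁻¹' {φ y} = {y} := by
        ext z
        simp [hφ.eq_iff]
      rw [← hy, hpre]
      refine hS.diff_singleton (IsGreedyStep.preimage (hy ▸ hrun k (by omega)) fun z => ?_)
      refine lineDeg_preimage hφ fun L hL hzL hLS => ?_
      exact hconf L hL (hLS.trans (greedySeq_antitone P hjk)) ⟨φ z, hzL, z, rfl⟩
    · rwa [Set.preimage_singleton_eq_empty.mpr hPk, Set.sdiff_empty]

theorem isGreedyCapset_preimage_inter {P : ℕ → 𝔽₃^n} {j k : ℕ}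
    (hrun : ∀ i < k, IsGreedyStep (greedySeq P i) (P i)) (hcap : IsCapset (greedySeq P k))
    (hjk : j ≤ k) {a : 𝔽₃^n} {b c : ZMod 3} (hH₀ : (greedySeq P j)ᶜ = {x | a ⬝ᵥ x = b})
    (hc : c ≠ b) {φ : 𝔽₃^m →ᵃ[ZMod 3] 𝔽₃^n} (hφ : Function.Injective φ)
    (hrange : Set.range φ = {x | a ⬝ᵥ x = c}) :
    IsGreedyCapset (φ ⁻¹' (greedySeq P k ∩ {x | a ⬝ᵥ x = c})) := by
  have hSj : greedySeq P j = {x | a ⬝ᵥ x = b}ᶜ := by rw [← hH₀, compl_compl]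
  rw [Set.preimage_inter, ← hrange, Set.preimage_range, Set.inter_univ]
  refine (isGreedyReachable_preimage_greedySeq hrun hjk hφ ?_ ?_).isGreedyCapset (hcap.preimage hφ)
  · rw [hrange, hSj]
    exact fun x hxc hxb => hc (hxc.symm.trans hxb)
  · rw [hrange, hSj]
    exact fun L hL hLS hLc => hL.subset_of_dotProduct_ne hLS hLc

/-- Every greedy capset `C ⊆ 𝔽₃ⁿ` (`n ≥ 1`) misses an affine hyperplane
`H₀`, and on each of the two parallel hyperplanes `H₁, H₂` it induces (via any affine
bijection `φ : 𝔽₃ⁿ⁻¹ → Hᵢ`) a greedy capset of `𝔽₃ⁿ⁻¹`. -/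
theorem greedy_capsets_stmt4 {n : ℕ} (hn : 1 ≤ n) (C : Set (Fin n → ZMod 3))
    (hC : IsGreedyCapset C) :
    ∃ H₀ H₁ H₂ : Set (Fin n → ZMod 3), ParallelTriple H₀ H₁ H₂ ∧ C ∩ H₀ = ∅ ∧
      (∀ φ : (Fin (n - 1) → ZMod 3) →ᵃ[ZMod 3] (Fin n → ZMod 3),
        Function.Injective φ → Set.range φ = H₁ → IsGreedyCapset (φ ⁻¹' (C ∩ H₁))) ∧
      (∀ φ : (Fin (n - 1) → ZMod 3) →ᵃ[ZMod 3] (Fin n → ZMod 3),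
        Function.Injective φ → Set.range φ = H₂ → IsGreedyCapset (φ ⁻¹' (C ∩ H₂))) := by
  obtain ⟨k, P, hrun, rfl, hcap⟩ := hC
  obtain ⟨j, hjk, a, b, ha, hH₀⟩ := exists_compl_greedySeq_isHyperplane hn hrun hcap
  refine ⟨_, _, _, ⟨a, b, ha, rfl, rfl, rfl⟩, ?_,
    fun φ hφ hrange => isGreedyCapset_preimage_inter hrun hcap hjk hH₀ ?_ hφ hrange,
    fun φ hφ hrange => isGreedyCapset_preimage_inter hrun hcap hjk hH₀ ?_ hφ hrange⟩
  · rw [← hH₀, ← Set.disjoint_iff_inter_eq_empty]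
    exact disjoint_compl_right.mono_right (Set.compl_subset_compl.mpr (greedySeq_antitone P hjk))
  · exact add_ne_left.mpr one_ne_zero
  · exact add_ne_left.mpr (by decide)
end

section
/- Let H₀ be an affine hyperplane in 𝔽₃ⁿ, let T ⊊ H₀ be a proper subset, and set S = 𝔽₃ⁿ \ T. Then every point P ∈ S \ H₀ satisfies deg_S(P) = (3ⁿ − 1)/2 − |T|, and every point Q ∈ H₀ \ T satisfies deg_S(Q) ≥ (3ⁿ − 1)/2 − |T|. In particular there is a point of H₀ \ T at which deg_S attains its maximum over S. -/
namespace Stmt7Aux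

variable {n : ℕ}

abbrev Pt (n : ℕ) := Fin n → ZMod 3

def ln (p v : Pt n) : Set (Pt n) := {x | ∃ t : ZMod 3, x = p + t • v}

lemma mem_ln {p v x : Pt n} : x ∈ ln p v ↔ ∃ t : ZMod 3, x = p + t • v := Iff.rfl

lemma self_mem_ln (p v : Pt n) : p ∈ ln p v := ⟨0, by simp⟩

lemma ln_reparam (p v : Pt n) {s : ZMod 3} (hs : s ≠ 0) : ln p (s • v) = ln p v := by
  ext x
  constructor
  · rintro ⟨t, rfl⟩
    exact ⟨t * s, by rw [mul_smul]⟩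
  · rintro ⟨t, rfl⟩
    refine ⟨t * s⁻¹, ?_⟩
    rw [smul_smul, mul_assoc, inv_mul_cancel₀ hs, mul_one]


lemma ln_shift {p q v : Pt n} (hq : q ∈ ln p v) : ln q v = ln p v := by
  obtain ⟨t₀, rfl⟩ := hq
  ext x
  constructor
  · rintro ⟨t, rfl⟩
    exact ⟨t₀ + t, by rw [add_smul]; abel⟩
  · rintro ⟨t, rfl⟩
    exact ⟨t - t₀, by rw [sub_smul]; abel⟩

lemma isLine_through_iff {p : Pt n} {L : Set (Pt n)} :
    (IsLine L ∧ p ∈ L) ↔ ∃ v : Pt n, v ≠ 0 ∧ L = ln p v := by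
  constructor
  · rintro ⟨⟨q, v, hv, rfl⟩, hp⟩
    exact ⟨v, hv, (ln_shift hp).symm⟩
  · rintro ⟨v, hv, rfl⟩
    exact ⟨⟨p, v, hv, rfl⟩, self_mem_ln p v⟩

lemma neg_ne {v : Pt n} (hv : v ≠ 0) : v ≠ -v := by
  intro h
  apply hv
  funext i
  have : v i = - v i := congrFun h i
  have h3 : ∀ z : ZMod 3, z = -z → z = 0 := by decide
  exact h3 _ this

lemma ln_eq_iff {p v w : Pt n} (hv : v ≠ 0) (hw : w ≠ 0) :
    ln p w = ln p v ↔ (w = v ∨ w = -v) := by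
  constructor
  · intro h
    have hmem : p + w ∈ ln p v := by
      rw [← h]; exact ⟨1, by rw [one_smul]⟩
    obtain ⟨t, ht⟩ := hmem
    have hwt : w = t • v := by
      have := ht
      have : w = t • v := by
        apply_fun (· - p) at ht
        simpa [add_comm, add_sub_cancel_left] using ht
      exact this
    have ht0 : t ≠ 0 := by rintro rfl; simp at hwt; exact hw hwt
    have : t = 1 ∨ t = -1 := by
      clear ht hwt
      revert ht0; revert t; decide
    rcases this with rfl | rfl
    · left; rw [hwt, one_smul]
    · right; rw [hwt, neg_smul, one_smul]
  · rintro (rfl | rfl)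
    · rfl
    · have : -v = (-1 : ZMod 3) • v := by rw [neg_smul, one_smul]
      rw [this, ln_reparam]
      decide


lemma two_mul_ncard_lines (p : Pt n) (Φ : Set (Pt n) → Prop) :
    2 * Set.ncard {L : Set (Pt n) | IsLine L ∧ p ∈ L ∧ Φ L} =
      Set.ncard {v : Pt n | v ≠ 0 ∧ Φ (ln p v)} := by
  classical
  have hfin : ({v : Pt n | v ≠ 0 ∧ Φ (ln p v)}).Finite := Set.toFinite _
  set s : Finset (Pt n) := hfin.toFinset with hs
  have hmem : ∀ v, v ∈ s ↔ v ≠ 0 ∧ Φ (ln p v) := by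
    intro v; rw [hs, Set.Finite.mem_toFinset]; rfl
  have himg : {L : Set (Pt n) | IsLine L ∧ p ∈ L ∧ Φ L} = ↑(s.image (ln p)) := by
    ext L
    simp only [Finset.coe_image, Set.mem_image, Finset.mem_coe, Set.mem_setOf_eq]
    constructor
    · rintro ⟨hL, hp, hΦ⟩
      obtain ⟨v, hv, rfl⟩ := isLine_through_iff.mp ⟨hL, hp⟩
      exact ⟨v, (hmem v).mpr ⟨hv, hΦ⟩, rfl⟩
    · rintro ⟨v, hv, rfl⟩
      obtain ⟨hv0, hΦ⟩ := (hmem v).mp hv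
      obtain ⟨h1, h2⟩ := isLine_through_iff.mpr ⟨v, hv0, rfl⟩
      exact ⟨h1, h2, hΦ⟩
  rw [himg, Set.ncard_coe_finset]
  have hcard := Finset.card_eq_sum_card_image (ln p) s
  have hfib : ∀ b ∈ s.image (ln p), (s.filter (fun a => ln p a = b)).card = 2 := by
    intro b hb
    obtain ⟨v₀, hv₀s, rfl⟩ := Finset.mem_image.mp hb
    obtain ⟨hv₀0, hΦ₀⟩ := (hmem v₀).mp hv₀s
    have : s.filter (fun a => ln p a = ln p v₀) = {v₀, -v₀} := by
      ext v
      simp only [Finset.mem_filter, Finset.mem_insert, Finset.mem_singleton]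
      constructor
      · rintro ⟨hvs, heq⟩
        exact (ln_eq_iff hv₀0 ((hmem v).mp hvs).1).mp heq
      · rintro (rfl | rfl)
        · exact ⟨hv₀s, rfl⟩
        · refine ⟨(hmem _).mpr ⟨neg_ne_zero.mpr hv₀0, ?_⟩,
            (ln_eq_iff hv₀0 (neg_ne_zero.mpr hv₀0)).mpr (Or.inr rfl)⟩
          rw [(ln_eq_iff hv₀0 (neg_ne_zero.mpr hv₀0)).mpr (Or.inr rfl)]
          exact hΦ₀
    rw [this, Finset.card_insert_of_notMem (by simpa using neg_ne hv₀0),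
      Finset.card_singleton]
  rw [Finset.sum_congr rfl hfib, Finset.sum_const, smul_eq_mul, mul_comm] at hcard
  have : Set.ncard {v : Pt n | v ≠ 0 ∧ Φ (ln p v)} = s.card := by
    rw [hs, Set.ncard_eq_toFinset_card _ hfin]
  rw [this, hcard]

lemma card_pt : Fintype.card (Pt n) = 3 ^ n := by
  rw [Fintype.card_fun, ZMod.card, Fintype.card_fin]

lemma two_mul_total (p : Pt n) :
    2 * Set.ncard {L : Set (Pt n) | IsLine L ∧ p ∈ L} = 3 ^ n - 1 := by
  have := two_mul_ncard_lines p (fun _ => True)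
  simp only [and_true] at this
  rw [this]
  have : {v : Pt n | v ≠ 0} = Set.univ \ {0} := by ext v; simp
  rw [this, Set.ncard_diff (by simp), Set.ncard_univ, Set.ncard_singleton,
    Nat.card_eq_fintype_card, card_pt]


def φ (a : Pt n) (x : Pt n) : ZMod 3 := ∑ i, a i * x i

lemma φ_add (a x y : Pt n) : φ a (x + y) = φ a x + φ a y := by
  simp [φ, mul_add, Finset.sum_add_distrib]

lemma φ_smul (a : Pt n) (c : ZMod 3) (x : Pt n) : φ a (c • x) = c * φ a x := by
  simp [φ, Finset.mul_sum, mul_left_comm]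

/-- The set of lines through `p ∉ T` that are *not* inside `univ \ T` is the image of `T`
under `t ↦ ln p (t - p)`. -/
lemma bad_lines_eq_image {p : Pt n} {T : Set (Pt n)} (hp : p ∉ T) :
    {L : Set (Pt n) | IsLine L ∧ p ∈ L ∧ ¬ L ⊆ Set.univ \ T} =
      (fun t => ln p (t - p)) '' T := by
  ext L
  simp only [Set.mem_setOf_eq, Set.mem_image]
  constructor
  · rintro ⟨hL, hpL, hnot⟩
    obtain ⟨v, hv, rfl⟩ := isLine_through_iff.mp ⟨hL, hpL⟩
    rw [Set.not_subset] at hnot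
    obtain ⟨t, htL, htT⟩ := hnot
    simp only [Set.mem_diff, Set.mem_univ, true_and, not_not] at htT
    refine ⟨t, htT, ?_⟩
    obtain ⟨c, rfl⟩ := htL
    have hc : c ≠ 0 := by rintro rfl; simp at htT; exact hp htT
    have : p + c • v - p = c • v := by abel
    rw [this, ln_reparam _ _ hc]
  · rintro ⟨t, htT, rfl⟩
    have htp : t - p ≠ 0 := sub_ne_zero.mpr (by rintro rfl; exact hp htT)
    refine ⟨(isLine_through_iff.mpr ⟨_, htp, rfl⟩).1,
      (isLine_through_iff.mpr ⟨_, htp, rfl⟩).2, ?_⟩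
    rw [Set.not_subset]
    refine ⟨t, ⟨1, by rw [one_smul]; abel⟩, ?_⟩
    simp [htT]

/-- If `p` is off the hyperplane `{x | φ a x = b}` and `T` is inside it, then
`t ↦ ln p (t - p)` is injective on `T`. -/
lemma injOn_of_off_hyperplane {p : Pt n} {a : Pt n} {b : ZMod 3} {T : Set (Pt n)}
    (hT : ∀ t ∈ T, φ a t = b) (hp : φ a p ≠ b) :
    Set.InjOn (fun t => ln p (t - p)) T := by
  intro t ht t' ht' heq
  have htp : t - p ≠ 0 := sub_ne_zero.mpr (by rintro rfl; exact hp (hT t ht))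
  have ht'p : t' - p ≠ 0 := sub_ne_zero.mpr (by rintro rfl; exact hp (hT t' ht'))
  simp only at heq
  rcases (ln_eq_iff htp ht'p).mp heq.symm with h | h
  · have := congrArg (· + p) h
    simpa [sub_add_cancel, eq_comm] using this
  · exfalso
    apply hp
    have h2 : t' = -t + p + p := by
      have := congrArg (· + p) h
      simp only [sub_add_cancel, neg_sub] at this
      rw [this]; abel
    have := hT t' ht'
    rw [h2, φ_add, φ_add] at this
    have hnt : φ a (-t) = - φ a t := by
      have : (-t : Pt n) = (-1 : ZMod 3) • t := by rw [neg_smul, one_smul]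
      rw [this, φ_smul]; ring
    rw [hnt, hT t ht] at this
    -- this : -b + φ a p + φ a p = b ⇒ 2 φ a p = 2b ⇒ φ a p = b (char 3: 2 invertible)
    have h3 : ∀ x y : ZMod 3, -y + x + x = y → x = y := by decide
    exact h3 _ _ this


lemma deg_split {p : Pt n} {T : Set (Pt n)} :
    lineDeg (Set.univ \ T) p +
      Set.ncard {L : Set (Pt n) | IsLine L ∧ p ∈ L ∧ ¬ L ⊆ Set.univ \ T} =
      Set.ncard {L : Set (Pt n) | IsLine L ∧ p ∈ L} := by
  rw [lineDeg, ← Set.ncard_union_eq ?_ (Set.toFinite _) (Set.toFinite _)]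
  · congr 1
    ext L
    simp only [Set.mem_union, Set.mem_setOf_eq]
    tauto
  · rw [Set.disjoint_left]
    rintro L ⟨_, _, h⟩ ⟨_, _, h'⟩
    exact h' h

lemma deg_ge {p : Pt n} {T : Set (Pt n)} (hp : p ∉ T) :
    (3 ^ n - 1) / 2 - T.ncard ≤ lineDeg (Set.univ \ T) p := by
  have hsplit := deg_split (p := p) (T := T)
  have htot := two_mul_total p
  have hbad : Set.ncard {L : Set (Pt n) | IsLine L ∧ p ∈ L ∧ ¬ L ⊆ Set.univ \ T}
      ≤ T.ncard := by
    rw [bad_lines_eq_image hp]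
    exact Set.ncard_image_le (Set.toFinite _)
  have h1 : 1 ≤ 3 ^ n := Nat.one_le_pow _ _ (by norm_num)
  omega

lemma deg_eq {p : Pt n} {a : Pt n} {b : ZMod 3} {T : Set (Pt n)}
    (hT : ∀ t ∈ T, φ a t = b) (hp : φ a p ≠ b) (hpT : p ∉ T) :
    lineDeg (Set.univ \ T) p = (3 ^ n - 1) / 2 - T.ncard := by
  have hsplit := deg_split (p := p) (T := T)
  have htot := two_mul_total p
  have hbad : Set.ncard {L : Set (Pt n) | IsLine L ∧ p ∈ L ∧ ¬ L ⊆ Set.univ \ T}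
      = T.ncard := by
    rw [bad_lines_eq_image hpT, Set.ncard_image_of_injOn (injOn_of_off_hyperplane hT hp)]
  have h1 : 1 ≤ 3 ^ n := Nat.one_le_pow _ _ (by norm_num)
  omega

end Stmt7Aux


/-- Let `H₀` be an affine hyperplane in `𝔽₃ⁿ`, `T ⊊ H₀`, and
`S = 𝔽₃ⁿ \ T`. Every point of `S` outside `H₀` has degree exactly `(3ⁿ − 1)/2 − |T|`,
every point of `H₀ \ T` has degree at least `(3ⁿ − 1)/2 − |T|`, and the maximum of the
degree over `S` is attained at a point of `H₀ \ T`. -/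
theorem greedy_capsets_stmt7 {n : ℕ} (H₀ T : Set (Fin n → ZMod 3))
    (hH₀ : IsHyperplane H₀) (hT : T ⊂ H₀) (S : Set (Fin n → ZMod 3))
    (hS : S = Set.univ \ T) :
    (∀ P ∈ S \ H₀, lineDeg S P = (3 ^ n - 1) / 2 - T.ncard) ∧
    (∀ Q ∈ H₀ \ T, (3 ^ n - 1) / 2 - T.ncard ≤ lineDeg S Q) ∧
    (∃ Q ∈ H₀ \ T, ∀ P ∈ S, lineDeg S P ≤ lineDeg S Q) := by
  obtain ⟨a, b, ha, hHeq⟩ := hH₀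
  subst hS
  have hTsub : T ⊆ H₀ := hT.subset
  have hTH : ∀ t ∈ T, Stmt7Aux.φ a t = b := by
    intro t ht
    have := hTsub ht
    rw [hHeq] at this
    exact this
  refine ⟨?_, ?_, ?_⟩
  · rintro P ⟨hPS, hPH⟩
    have hp : Stmt7Aux.φ a P ≠ b := by rw [hHeq] at hPH; exact hPH
    exact Stmt7Aux.deg_eq hTH hp hPS.2
  · rintro Q ⟨hQH, hQT⟩
    exact Stmt7Aux.deg_ge hQT
  · obtain ⟨q, hqH, hqT⟩ := Set.exists_of_ssubset hT
    obtain ⟨Q, hQ, hmax⟩ := Set.exists_max_image (H₀ \ T)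
      (lineDeg (Set.univ \ T)) (Set.toFinite _) ⟨q, hqH, hqT⟩
    refine ⟨Q, hQ, ?_⟩
    intro P hP
    have hPT : P ∉ T := hP.2
    by_cases hPH : P ∈ H₀
    · exact hmax P ⟨hPH, hPT⟩
    · have h1 := Stmt7Aux.deg_eq hTH (by rw [hHeq] at hPH; exact hPH) hPT
      have h2 := Stmt7Aux.deg_ge (p := Q) hQ.2
      omega
end

section
/- Let H₀ be an affine hyperplane in 𝔽₃ⁿ and let T ⊊ H₀ be a proper subset whose affine span equals H₀. Set S = 𝔽₃ⁿ \ T. Then there exists a point P ∈ H₀ \ T such that deg_S(P) > deg_S(Q) for every Q ∈ S \ H₀. -/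
section Aux
variable {n : ℕ}

/-- Line through two points. -/
def lineThru (X Y : Fin n → ZMod 3) : Set (Fin n → ZMod 3) :=
  {x | ∃ t : ZMod 3, x = X + t • (Y - X)}

lemma mem_lineThru_left (X Y : Fin n → ZMod 3) : X ∈ lineThru X Y := ⟨0, by simp⟩

lemma mem_lineThru_right (X Y : Fin n → ZMod 3) : Y ∈ lineThru X Y := ⟨1, by simp⟩

lemma isLine_lineThru {X Y : Fin n → ZMod 3} (h : X ≠ Y) : IsLine (lineThru X Y) :=
  ⟨X, Y - X, sub_ne_zero.mpr (Ne.symm h), rfl⟩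

lemma line_eq_lineThru {L : Set (Fin n → ZMod 3)} (hL : IsLine L) {X Y : Fin n → ZMod 3}
    (hX : X ∈ L) (hY : Y ∈ L) (hXY : X ≠ Y) : L = lineThru X Y := by
  obtain ⟨p, v, hv, rfl⟩ := hL
  obtain ⟨s₁, rfl⟩ := hX
  obtain ⟨s₂, rfl⟩ := hY
  have hc : s₂ - s₁ ≠ 0 := by
    intro h
    exact hXY (by rw [sub_eq_zero] at h; rw [h])
  have hYX : (p + s₂ • v) - (p + s₁ • v) = (s₂ - s₁) • v := by
    rw [sub_smul]; abel
  ext x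
  constructor
  · rintro ⟨s, rfl⟩
    refine ⟨(s - s₁) * (s₂ - s₁)⁻¹, ?_⟩
    rw [hYX, smul_smul, mul_assoc, inv_mul_cancel₀ hc, mul_one]
    module
  · rintro ⟨s, rfl⟩
    refine ⟨s₁ + s * (s₂ - s₁), ?_⟩
    rw [hYX, smul_smul]
    module

end Aux
section Aux2
variable {n : ℕ}

lemma mem_lineThru_iff {X Y x : Fin n → ZMod 3} :
    x ∈ lineThru X Y ↔ x = X ∨ x = Y ∨ x = -X - Y := by
  have key : ∀ a b c : ZMod 3, ∀ t : ZMod 3,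
      (c = a + t * (b - a)) → (c = a ∨ c = b ∨ c = -a-b) := by decide
  constructor
  · rintro ⟨t, rfl⟩
    have h3 : ∀ s : ZMod 3, s = 0 ∨ s = 1 ∨ s = 2 := by decide
    rcases h3 t with rfl | rfl | rfl
    · left; simp
    · right; left; simp
    · right; right
      funext i
      have : ∀ a b : ZMod 3, a + 2 * (b - a) = -a - b := by decide
      simpa using this (X i) (Y i)
  · rintro (h | h | h) <;> subst h
    · exact mem_lineThru_left _ _
    · exact mem_lineThru_right _ _
    · refine ⟨2, ?_⟩
      funext i
      have : ∀ a b : ZMod 3, -a - b = a + 2 * (b - a) := by decide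
      simpa using this (X i) (Y i)

lemma isLine_image {L : Set (Fin n → ZMod 3)} (hL : IsLine L) (c : Fin n → ZMod 3) :
    IsLine ((fun x => x + c) '' L) := by
  obtain ⟨p, v, hv, rfl⟩ := hL
  refine ⟨p + c, v, hv, ?_⟩
  ext x
  simp only [Set.mem_image, Set.mem_setOf_eq]
  constructor
  · rintro ⟨y, ⟨t, rfl⟩, rfl⟩
    exact ⟨t, by abel⟩
  · rintro ⟨t, rfl⟩
    exact ⟨p + t • v, ⟨t, rfl⟩, by abel⟩

lemma ncard_allL_eq (X c : Fin n → ZMod 3) :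
    Set.ncard {L : Set (Fin n → ZMod 3) | IsLine L ∧ X ∈ L}
      = Set.ncard {L : Set (Fin n → ZMod 3) | IsLine L ∧ X + c ∈ L} := by
  have hinj : Function.Injective (fun x : Fin n → ZMod 3 => x + c) :=
    fun x y h => by simpa using h
  have himg : (fun L => (fun x : Fin n → ZMod 3 => x + c) '' L) ''
      {L : Set (Fin n → ZMod 3) | IsLine L ∧ X ∈ L}
      = {L : Set (Fin n → ZMod 3) | IsLine L ∧ X + c ∈ L} := by
    ext M
    simp only [Set.mem_image, Set.mem_setOf_eq]
    constructor
    · rintro ⟨L, ⟨hL, hX⟩, rfl⟩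
      exact ⟨isLine_image hL c, ⟨X, hX, rfl⟩⟩
    · rintro ⟨hM, hXc⟩
      refine ⟨(fun x => x + (-c)) '' M, ⟨isLine_image hM (-c), ⟨X + c, hXc, by simp⟩⟩, ?_⟩
      rw [Set.image_image]
      simpa using Set.image_id M
  rw [← himg, Set.ncard_image_of_injective _ (Set.image_injective.mpr hinj)]

end Aux2
section Aux3
variable {n : ℕ}

/-- `lineDeg` + number of "bad" lines (meeting `T`) through `X` equals total lines through `X`. -/
lemma lineDeg_split (T : Set (Fin n → ZMod 3)) (X : Fin n → ZMod 3) :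
    Set.ncard {L : Set (Fin n → ZMod 3) | IsLine L ∧ X ∈ L ∧ L ⊆ Set.univ \ T}
      + Set.ncard {L : Set (Fin n → ZMod 3) | IsLine L ∧ X ∈ L ∧ (L ∩ T).Nonempty}
      = Set.ncard {L : Set (Fin n → ZMod 3) | IsLine L ∧ X ∈ L} := by
  rw [← Set.ncard_union_eq ?_ (Set.toFinite _) (Set.toFinite _)]
  · congr 1
    ext L
    simp only [Set.mem_union, Set.mem_setOf_eq]
    constructor
    · rintro (⟨h1, h2, _⟩ | ⟨h1, h2, _⟩) <;> exact ⟨h1, h2⟩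
    · rintro ⟨h1, h2⟩
      by_cases hb : (L ∩ T).Nonempty
      · exact Or.inr ⟨h1, h2, hb⟩
      · refine Or.inl ⟨h1, h2, fun x hx => ⟨trivial, fun hxT => hb ⟨x, hx, hxT⟩⟩⟩
  · rw [Set.disjoint_left]
    rintro L ⟨_, _, hsub⟩ ⟨_, _, x, hxL, hxT⟩
    exact (hsub hxL).2 hxT

lemma badL_eq_image {T : Set (Fin n → ZMod 3)} {X : Fin n → ZMod 3} (hX : X ∉ T) :
    {L : Set (Fin n → ZMod 3) | IsLine L ∧ X ∈ L ∧ (L ∩ T).Nonempty}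
      = (fun t => lineThru X t) '' T := by
  ext L
  simp only [Set.mem_setOf_eq, Set.mem_image]
  constructor
  · rintro ⟨hL, hXL, t, htL, htT⟩
    have hXt : X ≠ t := fun h => hX (h ▸ htT)
    exact ⟨t, htT, (line_eq_lineThru hL hXL htL hXt).symm⟩
  · rintro ⟨t, htT, rfl⟩
    have hXt : X ≠ t := fun h => hX (h ▸ htT)
    exact ⟨isLine_lineThru hXt, mem_lineThru_left _ _,
      ⟨t, mem_lineThru_right _ _, htT⟩⟩

end Aux3

/-- Let `H₀` be an affine hyperplane in `𝔽₃ⁿ` and `T ⊊ H₀` a proper subset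
whose affine span equals `H₀`; set `S = 𝔽₃ⁿ \ T`. Then some point `P ∈ H₀ \ T` has
strictly larger degree in `S` than every point of `S` outside `H₀`. -/
theorem greedy_capsets_stmt8 {n : ℕ} (H₀ T : Set (Fin n → ZMod 3))
    (hH₀ : IsHyperplane H₀) (hT : T ⊂ H₀)
    (hspan : (affineSpan (ZMod 3) T : Set (Fin n → ZMod 3)) = H₀)
    (S : Set (Fin n → ZMod 3)) (hS : S = Set.univ \ T) :
    ∃ P ∈ H₀ \ T, ∀ Q ∈ S \ H₀, lineDeg S Q < lineDeg S P := by
  subst hS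
  obtain ⟨a, b, ha, hH⟩ := hH₀
  set φ : (Fin n → ZMod 3) → ZMod 3 := fun x => ∑ i, a i * x i with hφ
  have hφ_add : ∀ x y, φ (x + y) = φ x + φ y := by
    intro x y
    simp [hφ, Pi.add_apply, mul_add, Finset.sum_add_distrib]
  have hφ_neg : ∀ x, φ (-x) = - φ x := by
    intro x
    simp [hφ, mul_neg]
  have hmemH : ∀ x, x ∈ H₀ ↔ φ x = b := by
    intro x; rw [hH]; exact Iff.rfl
  have hTH : T ⊆ H₀ := hT.1
  -- Step 1: find two distinct points of T whose "third point" is outside T.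
  have hex : ∃ t ∈ T, ∃ t' ∈ T, t ≠ t' ∧ -t - t' ∉ T := by
    by_contra hcon
    push_neg at hcon
    have hcl : ∀ t ∈ T, ∀ t' ∈ T, -t - t' ∈ T := by
      intro t ht t' ht'
      by_cases h : t = t'
      · subst h
        have heq : -t - t = t := by
          funext i
          have : ∀ z : ZMod 3, -z - z = z := by decide
          simpa using this (t i)
        rw [heq]; exact ht
      · exact hcon t ht t' ht' h
    have hzmod : ∀ s : ZMod 3, s = 0 ∨ s = 1 ∨ s = 2 := by decide
    let A : AffineSubspace (ZMod 3) (Fin n → ZMod 3) :=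
      { carrier := T
        smul_vsub_vadd_mem' := by
          intro c p₁ p₂ p₃ h₁ h₂ h₃
          rcases hzmod c with rfl | rfl | rfl
          · simpa using h₃
          · have := hcl _ h₂ _ (hcl _ h₁ _ h₃)
            have heq : (1 : ZMod 3) • (p₁ -ᵥ p₂) +ᵥ p₃ = -p₂ - (-p₁ - p₃) := by
              simp only [vsub_eq_sub, vadd_eq_add, one_smul]
              abel
            rw [heq]; exact this
          · have := hcl _ h₁ _ (hcl _ h₂ _ h₃)
            have heq : (2 : ZMod 3) • (p₁ -ᵥ p₂) +ᵥ p₃ = -p₁ - (-p₂ - p₃) := by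
              funext i
              have : ∀ x y z : ZMod 3, 2 * (x - y) + z = -x - (-y - z) := by decide
              simpa using this (p₁ i) (p₂ i) (p₃ i)
            rw [heq]; exact this }
    have hle : affineSpan (ZMod 3) T ≤ A := affineSpan_le.mpr (subset_refl T)
    have : H₀ ⊆ T := by
      rw [← hspan]
      exact hle
    exact hT.2 this
  obtain ⟨t, ht, t', ht', htt', hPT⟩ := hex
  set P : Fin n → ZMod 3 := -t - t' with hPdef
  have htb : φ t = b := (hmemH t).mp (hTH ht)
  have htb' : φ t' = b := (hmemH t').mp (hTH ht')
  have hPH : P ∈ H₀ := by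
    rw [hmemH P]
    have h1 : φ P = φ (-t) + φ (-t') := by
      rw [hPdef, sub_eq_add_neg, hφ_add]
    rw [h1, hφ_neg, hφ_neg, htb, htb']
    have : ∀ z : ZMod 3, -z + -z = z := by decide
    exact this b
  refine ⟨P, ⟨hPH, hPT⟩, ?_⟩
  intro Q hQ
  obtain ⟨hQS, hQH⟩ := hQ
  have hQT : Q ∉ T := hQS.2
  have e1 : lineDeg (Set.univ \ T) Q
      + Set.ncard {L : Set (Fin n → ZMod 3) | IsLine L ∧ Q ∈ L ∧ (L ∩ T).Nonempty}
      = Set.ncard {L : Set (Fin n → ZMod 3) | IsLine L ∧ Q ∈ L} := lineDeg_split T Q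
  have e2 : lineDeg (Set.univ \ T) P
      + Set.ncard {L : Set (Fin n → ZMod 3) | IsLine L ∧ P ∈ L ∧ (L ∩ T).Nonempty}
      = Set.ncard {L : Set (Fin n → ZMod 3) | IsLine L ∧ P ∈ L} := lineDeg_split T P
  have hNeq : Set.ncard {L : Set (Fin n → ZMod 3) | IsLine L ∧ P ∈ L}
      = Set.ncard {L : Set (Fin n → ZMod 3) | IsLine L ∧ Q ∈ L} := by
    have h1 := ncard_allL_eq P (Q - P)
    have h2 : P + (Q - P) = Q := by abel
    rw [h2] at h1
    exact h1
  have hbadQ : Set.ncard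
      {L : Set (Fin n → ZMod 3) | IsLine L ∧ Q ∈ L ∧ (L ∩ T).Nonempty} = T.ncard := by
    rw [badL_eq_image hQT]
    apply Set.ncard_image_of_injOn
    intro x hx y hy hxy
    have hxy' : lineThru Q x = lineThru Q y := hxy
    have hyx : y ∈ lineThru Q x := hxy' ▸ mem_lineThru_right Q y
    rcases mem_lineThru_iff.mp hyx with h | h | h
    · exact absurd (by rw [← h]; exact hTH hy) hQH
    · exact h.symm
    · exfalso
      have hyb : φ y = b := (hmemH y).mp (hTH hy)
      have hxb : φ x = b := (hmemH x).mp (hTH hx)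
      have hQb : φ (-Q - x) = -φ Q - φ x := by
        rw [sub_eq_add_neg, hφ_add, hφ_neg, hφ_neg, ← sub_eq_add_neg]
      have hkey : -φ Q - b = b := by
        have h5 : -φ Q - φ x = b := by rw [← hQb, ← h]; exact hyb
        rw [hxb] at h5
        exact h5
      have hQb' : φ Q = b := by
        have key : ∀ u w : ZMod 3, -u - w = w → u = w := by decide
        exact key _ _ hkey
      exact hQH ((hmemH Q).mpr hQb')
  have hbadP : Set.ncard
      {L : Set (Fin n → ZMod 3) | IsLine L ∧ P ∈ L ∧ (L ∩ T).Nonempty} < T.ncard := by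
    rw [badL_eq_image hPT]
    have hPt : P ≠ t := fun h => hPT (by rw [h]; exact ht)
    have hPt' : P ≠ t' := fun h => hPT (by rw [h]; exact ht')
    have ht'mem : t' ∈ lineThru P t := by
      rw [mem_lineThru_iff]
      right; right
      rw [hPdef]
      abel
    have hdup : lineThru P t = lineThru P t' :=
      line_eq_lineThru (isLine_lineThru hPt) (mem_lineThru_left _ _) ht'mem hPt'
    have himg : (fun s => lineThru P s) '' T = (fun s => lineThru P s) '' (T \ {t'}) := by
      apply Set.Subset.antisymm
      · rintro L ⟨s, hs, rfl⟩
        by_cases h : s = t'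
        · subst h
          exact ⟨t, ⟨ht, by simpa using htt'⟩, hdup⟩
        · exact ⟨s, ⟨hs, h⟩, rfl⟩
      · exact Set.image_mono Set.diff_subset
    rw [himg]
    calc ((fun s => lineThru P s) '' (T \ {t'})).ncard
        ≤ (T \ {t'}).ncard := Set.ncard_image_le (Set.toFinite _)
      _ < T.ncard := Set.ncard_diff_singleton_lt_of_mem ht' (Set.toFinite _)
  omega
end

section
/- For every n ≥ 1, the set C = {0, 1}ⁿ ⊆ 𝔽₃ⁿ (all vectors each of whose coordinates is 0 or 1) is a greedy capset in 𝔽₃ⁿ. -/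
namespace Greedy10

abbrev Pt (n : ℕ) := Fin n → ZMod 3

def Vdirs {n : ℕ} (S : Set (Pt n)) (P : Pt n) : Set (Pt n) :=
  {v | v ≠ 0 ∧ P + v ∈ S ∧ P - v ∈ S}

lemma two_smul_neg {n : ℕ} (v : Pt n) : (2 : ZMod 3) • v = -v := by
  funext i
  have h : ∀ a : ZMod 3, 2 * a = -a := by decide
  simpa using h (v i)

lemma neg_mem_vdirs {n : ℕ} {S : Set (Pt n)} {P v : Pt n} (h : v ∈ Vdirs S P) :
    -v ∈ Vdirs S P := by
  refine ⟨neg_ne_zero.mpr h.1, ?_, ?_⟩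
  · rw [← sub_eq_add_neg]; exact h.2.2
  · rw [sub_neg_eq_add]; exact h.2.1

lemma vdirs_card {n : ℕ} {S : Set (Pt n)} {P : Pt n} (hP : P ∈ S) :
    (Vdirs S P).ncard = 2 * lineDeg S P := by
  classical
  set φ : Pt n → Set (Pt n) := fun v => {x | ∃ t : ZMod 3, x = P + t • v} with hφ
  set LS : Set (Set (Pt n)) := {L | IsLine L ∧ P ∈ L ∧ L ⊆ S} with hLS
  have key1 : ∀ v ∈ Vdirs S P, φ v ∈ LS := by
    rintro v ⟨hv0, hv1, hv2⟩
    refine ⟨⟨P, v, hv0, rfl⟩, ⟨0, by simp⟩, ?_⟩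
    rintro x ⟨t, rfl⟩
    have htall : ∀ t : ZMod 3, t = 0 ∨ t = 1 ∨ t = 2 := by decide
    rcases htall t with rfl | rfl | rfl
    · simpa using hP
    · simpa using hv1
    · rw [two_smul_neg, ← sub_eq_add_neg]; exact hv2
  have keyneg : ∀ v : Pt n, φ (-v) = φ v := by
    intro v
    ext x
    constructor
    · rintro ⟨t, rfl⟩; exact ⟨-t, by module⟩
    · rintro ⟨t, rfl⟩; exact ⟨-t, by module⟩
  have key3 : ∀ v ∈ Vdirs S P, ∀ w, w ≠ 0 → φ v = φ w → w = v ∨ w = -v := by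
    intro v hv w hw0 hvw
    have hmem : P + w ∈ φ w := ⟨1, by module⟩
    rw [← hvw] at hmem
    obtain ⟨t, ht⟩ := hmem
    have hw : w = t • v := by
      have := ht; exact add_left_cancel (by rw [← this])
    have htall : ∀ t : ZMod 3, t = 0 ∨ t = 1 ∨ t = 2 := by decide
    rcases htall t with rfl | rfl | rfl
    · exact absurd (by simpa using hw) hw0
    · left; simpa using hw
    · right; rw [hw, two_smul_neg]
  have key2 : ∀ L : Set (Pt n), ∃ v, L ∈ LS → (v ∈ Vdirs S P ∧ φ v = L) := by
    intro L
    by_cases hL : L ∈ LS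
    · obtain ⟨⟨p, w, hw, rfl⟩, hPL, hLsub⟩ := hL
      obtain ⟨t₀, ht₀⟩ := hPL
      refine ⟨w, fun _ => ⟨⟨hw, ?_, ?_⟩, ?_⟩⟩
      · exact hLsub ⟨t₀ + 1, by rw [ht₀]; module⟩
      · exact hLsub ⟨t₀ - 1, by rw [ht₀]; module⟩
      · ext x
        constructor
        · rintro ⟨t, rfl⟩; exact ⟨t₀ + t, by rw [ht₀]; module⟩
        · rintro ⟨t, rfl⟩; exact ⟨t - t₀, by rw [ht₀]; module⟩
    · exact ⟨0, fun h => absurd h hL⟩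
  choose ρ hρ using key2
  set T : Set (Pt n) := ρ '' LS with hT
  have hTsub : T ⊆ Vdirs S P := by rintro _ ⟨L, hL, rfl⟩; exact (hρ L hL).1
  have hphiT : ∀ L ∈ LS, φ (ρ L) = L := fun L hL => (hρ L hL).2
  have hsplit : Vdirs S P = T ∪ (fun v => -v) '' T := by
    apply Set.Subset.antisymm
    · intro v hv
      have hL : φ v ∈ LS := key1 v hv
      have h3 := key3 v hv (ρ (φ v)) (hρ _ hL).1.1 (by rw [hphiT _ hL])
      rcases h3 with h | h
      · exact Or.inl (h ▸ ⟨φ v, hL, rfl⟩)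
      · right
        refine ⟨ρ (φ v), ⟨φ v, hL, rfl⟩, ?_⟩
        show -(ρ (φ v)) = v
        rw [h, neg_neg]
    · rintro v (hv | ⟨w, hw, rfl⟩)
      · exact hTsub hv
      · exact neg_mem_vdirs (hTsub hw)
  have hdisj : Disjoint T ((fun v => -v) '' T) := by
    rw [Set.disjoint_left]
    rintro v ⟨L₁, hL₁, rfl⟩ ⟨w, ⟨L₂, hL₂, rfl⟩, hneg⟩
    have hneg' : -(ρ L₂) = ρ L₁ := hneg
    have h1 : φ (ρ L₁) = L₁ := hphiT _ hL₁
    have h2 : φ (ρ L₁) = L₂ := by rw [← hneg', keyneg]; exact hphiT _ hL₂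
    have hLL : L₁ = L₂ := by rw [← h1, h2]
    have hz2 : ρ L₁ = ρ L₂ := by rw [hLL]
    have : ρ L₁ = - ρ L₁ := by nth_rewrite 2 [hz2]; exact hneg'.symm
    have hz : ρ L₁ = 0 := by
      funext i
      have hi := congrFun this i
      have : ∀ a : ZMod 3, a = -a → a = 0 := by decide
      exact this _ hi
    exact (hρ L₁ hL₁).1.1 hz
  have hinj : Set.InjOn ρ LS := by
    intro L₁ h₁ L₂ h₂ he
    rw [← hphiT _ h₁, ← hphiT _ h₂, he]
  have hc1 : T.ncard = LS.ncard := Set.ncard_image_of_injOn hinj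
  have hc2 : ((fun v => -v) '' T).ncard = T.ncard :=
    Set.ncard_image_of_injective _ neg_injective
  rw [hsplit, Set.ncard_union_eq hdisj (Set.toFinite _) (Set.toFinite _), hc1, hc2, hc1]
  rw [lineDeg, ← hLS]
  ring

def Box (n j : ℕ) : Set (Pt n) := {x | ∀ i : Fin n, (i : ℕ) < j → x i = 0 ∨ x i = 1}
def Pat (n j : ℕ) : Set (Pt n) := {u | ∀ i : Fin n, (i : ℕ) ≤ j → u i = 0}
def Pref (n j : ℕ) : Set (Pt n) :=
  {c | (∀ i : Fin n, (i : ℕ) < j → c i = 0 ∨ c i = 1) ∧ ∀ i : Fin n, j ≤ (i : ℕ) → c i = 0}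
def NZ (n j : ℕ) : Set (Pt n) := {w | w ≠ 0 ∧ w ∈ Pat n j}
def Dset (n j : ℕ) (X : Set (Pt n)) (u : Pt n) : Set (Pt n) :=
  {w | w ∈ NZ n j ∧ u + w ∉ X ∧ u - w ∉ X}

open Classical in
noncomputable def pickPat (n j : ℕ) (X : Set (Pt n)) : Pt n :=
  if h : (Pat n j \ X).Nonempty then
    (Set.exists_max_image (Pat n j \ X) (fun u => (Dset n j X u).ncard) (Set.toFinite _) h).choose
  else 0

noncomputable def Xseq (n j : ℕ) : ℕ → Set (Pt n)
  | 0 => ∅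
  | r + 1 => insert (pickPat n j (Xseq n j r)) (Xseq n j r)

noncomputable def qseq (n j r : ℕ) : Pt n := pickPat n j (Xseq n j r)

open Classical in
noncomputable def pickPref (n j : ℕ) (C : Set (Pt n)) : Pt n :=
  if h : (Pref n j \ C).Nonempty then h.choose else 0

noncomputable def Cseq (n j : ℕ) : ℕ → Set (Pt n)
  | 0 => ∅
  | s + 1 => insert (pickPref n j (Cseq n j s)) (Cseq n j s)

noncomputable def cseq (n j s : ℕ) : Pt n := pickPref n j (Cseq n j s)

def delta (n j : ℕ) : Pt n := fun i => if (i : ℕ) = j then 2 else 0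
noncomputable def point (n j r s : ℕ) : Pt n := cseq n j s + delta n j + qseq n j r
def patOf (n j : ℕ) (x : Pt n) : Pt n := fun i => if j < (i : ℕ) then x i else 0
def preOf (n j : ℕ) (x : Pt n) : Pt n := fun i => if (i : ℕ) < j then x i else 0
def cEq {n : ℕ} (x : Pt n) (j : ℕ) (a : ZMod 3) : Prop := ∀ i : Fin n, (i : ℕ) = j → x i = a

noncomputable def Stage (n j r s : ℕ) : Set (Pt n) :=
  {x | x ∈ Box n j ∧
    ¬ (cEq x j 2 ∧ (patOf n j x ∈ Xseq n j r ∨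
        (patOf n j x = qseq n j r ∧ preOf n j x ∈ Cseq n j s)))}

noncomputable def nrr (n j : ℕ) : ℕ := (Pat n j).ncard
noncomputable def ncc (n j : ℕ) : ℕ := (Pref n j).ncard

lemma zero_mem_Pat (n j : ℕ) : (0 : Pt n) ∈ Pat n j := fun _ _ => rfl
lemma zero_mem_Pref (n j : ℕ) : (0 : Pt n) ∈ Pref n j := ⟨fun _ _ => Or.inl rfl, fun _ _ => rfl⟩

lemma nrr_pos (n j : ℕ) : 1 ≤ nrr n j :=
  (Set.ncard_pos (Set.toFinite _)).mpr ⟨0, zero_mem_Pat n j⟩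
lemma ncc_pos (n j : ℕ) : 1 ≤ ncc n j :=
  (Set.ncard_pos (Set.toFinite _)).mpr ⟨0, zero_mem_Pref n j⟩

lemma pickPat_spec {n j : ℕ} {X : Set (Pt n)} (h : (Pat n j \ X).Nonempty) :
    pickPat n j X ∈ Pat n j \ X ∧
      ∀ u ∈ Pat n j \ X, (Dset n j X u).ncard ≤ (Dset n j X (pickPat n j X)).ncard := by
  have H := (Set.exists_max_image (Pat n j \ X)
    (fun u => (Dset n j X u).ncard) (Set.toFinite _) h).choose_spec
  rw [pickPat, dif_pos h]
  exact ⟨H.1, H.2⟩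

lemma pickPref_spec {n j : ℕ} {C : Set (Pt n)} (h : (Pref n j \ C).Nonempty) :
    pickPref n j C ∈ Pref n j \ C := by
  rw [pickPref, dif_pos h]
  exact h.choose_spec

lemma Xseq_card {n j : ℕ} : ∀ r ≤ nrr n j, Xseq n j r ⊆ Pat n j ∧ (Xseq n j r).ncard = r := by
  intro r
  induction r with
  | zero => intro _; simp [Xseq]
  | succ r ih =>
    intro hr
    obtain ⟨hsub, hcard⟩ := ih (Nat.le_of_succ_le hr)
    have hne : (Pat n j \ Xseq n j r).Nonempty := by
      rw [Set.nonempty_iff_ne_empty]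
      intro he
      have h1 : Pat n j ⊆ Xseq n j r := by rwa [Set.diff_eq_empty] at he
      have h2 : Xseq n j r = Pat n j := Set.Subset.antisymm hsub h1
      rw [h2] at hcard
      unfold nrr at hr
      omega
    have hps := pickPat_spec hne
    constructor
    · show insert (pickPat n j (Xseq n j r)) (Xseq n j r) ⊆ Pat n j
      exact Set.insert_subset hps.1.1 hsub
    · show (insert (pickPat n j (Xseq n j r)) (Xseq n j r)).ncard = r + 1
      rw [Set.ncard_insert_of_notMem hps.1.2 (Set.toFinite _), hcard]

lemma Xseq_diff_nonempty {n j r : ℕ} (hr : r < nrr n j) : (Pat n j \ Xseq n j r).Nonempty := by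
  obtain ⟨hsub, hcard⟩ := Xseq_card r (Nat.le_of_lt hr)
  rw [Set.nonempty_iff_ne_empty]
  intro he
  have h1 : Pat n j ⊆ Xseq n j r := by rwa [Set.diff_eq_empty] at he
  have h2 : Xseq n j r = Pat n j := Set.Subset.antisymm hsub h1
  rw [h2] at hcard
  unfold nrr at hr
  omega

lemma qseq_mem {n j r : ℕ} (hr : r < nrr n j) :
    qseq n j r ∈ Pat n j ∧ qseq n j r ∉ Xseq n j r :=
  ⟨(pickPat_spec (Xseq_diff_nonempty hr)).1.1, (pickPat_spec (Xseq_diff_nonempty hr)).1.2⟩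

lemma qseq_max {n j r : ℕ} (hr : r < nrr n j) :
    ∀ u ∈ Pat n j, u ∉ Xseq n j r →
      (Dset n j (Xseq n j r) u).ncard ≤ (Dset n j (Xseq n j r) (qseq n j r)).ncard :=
  fun u hu hu2 => (pickPat_spec (Xseq_diff_nonempty hr)).2 u ⟨hu, hu2⟩

lemma Xseq_full {n j : ℕ} : Xseq n j (nrr n j) = Pat n j := by
  obtain ⟨hsub, hcard⟩ := Xseq_card (nrr n j) le_rfl
  exact Set.eq_of_subset_of_ncard_le hsub (le_of_eq hcard.symm) (Set.toFinite _)

lemma Cseq_card {n j : ℕ} : ∀ s ≤ ncc n j, Cseq n j s ⊆ Pref n j ∧ (Cseq n j s).ncard = s := by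
  intro s
  induction s with
  | zero => intro _; simp [Cseq]
  | succ s ih =>
    intro hs
    obtain ⟨hsub, hcard⟩ := ih (Nat.le_of_succ_le hs)
    have hne : (Pref n j \ Cseq n j s).Nonempty := by
      rw [Set.nonempty_iff_ne_empty]
      intro he
      have h1 : Pref n j ⊆ Cseq n j s := by rwa [Set.diff_eq_empty] at he
      have h2 : Cseq n j s = Pref n j := Set.Subset.antisymm hsub h1
      rw [h2] at hcard
      unfold ncc at hs
      omega
    have hps := pickPref_spec hne
    constructor
    · show insert (pickPref n j (Cseq n j s)) (Cseq n j s) ⊆ Pref n j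
      exact Set.insert_subset hps.1 hsub
    · show (insert (pickPref n j (Cseq n j s)) (Cseq n j s)).ncard = s + 1
      rw [Set.ncard_insert_of_notMem hps.2 (Set.toFinite _), hcard]

lemma Cseq_diff_nonempty {n j s : ℕ} (hs : s < ncc n j) : (Pref n j \ Cseq n j s).Nonempty := by
  obtain ⟨hsub, hcard⟩ := Cseq_card s (Nat.le_of_lt hs)
  rw [Set.nonempty_iff_ne_empty]
  intro he
  have h1 : Pref n j ⊆ Cseq n j s := by rwa [Set.diff_eq_empty] at he
  have h2 : Cseq n j s = Pref n j := Set.Subset.antisymm hsub h1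
  rw [h2] at hcard
  unfold ncc at hs
  omega

lemma cseq_mem {n j s : ℕ} (hs : s < ncc n j) :
    cseq n j s ∈ Pref n j ∧ cseq n j s ∉ Cseq n j s :=
  ⟨(pickPref_spec (Cseq_diff_nonempty hs)).1, (pickPref_spec (Cseq_diff_nonempty hs)).2⟩

lemma Cseq_full {n j : ℕ} : Cseq n j (ncc n j) = Pref n j := by
  obtain ⟨hsub, hcard⟩ := Cseq_card (ncc n j) le_rfl
  exact Set.eq_of_subset_of_ncard_le hsub (le_of_eq hcard.symm) (Set.toFinite _)

lemma patOf_mem_Pat (n j : ℕ) (x : Pt n) : patOf n j x ∈ Pat n j := by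
  intro i hi
  simp only [patOf]
  rw [if_neg (by omega)]

lemma preOf_mem_Pref {n j : ℕ} {x : Pt n} (hx : x ∈ Box n j) : preOf n j x ∈ Pref n j := by
  constructor
  · intro i hi
    simp only [preOf]
    rw [if_pos hi]
    exact hx i hi
  · intro i hi
    simp only [preOf]
    rw [if_neg (by omega)]

lemma point_lt {n j r s : ℕ} (hr : r < nrr n j) {i : Fin n} (hi : (i : ℕ) < j) :
    point n j r s i = cseq n j s i := by
  have hq : qseq n j r i = 0 := (qseq_mem hr).1 i (by omega)
  simp only [point, Pi.add_apply, delta]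
  rw [if_neg (by omega), hq]
  ring

lemma point_eq {n j r s : ℕ} (hr : r < nrr n j) (hs : s < ncc n j) {i : Fin n}
    (hi : (i : ℕ) = j) : point n j r s i = 2 := by
  have hq : qseq n j r i = 0 := (qseq_mem hr).1 i (by omega)
  have hc : cseq n j s i = 0 := (cseq_mem hs).1.2 i (by omega)
  simp only [point, Pi.add_apply, delta]
  rw [if_pos hi, hq, hc]
  ring

lemma point_gt {n j r s : ℕ} (hs : s < ncc n j) {i : Fin n} (hi : j < (i : ℕ)) :
    point n j r s i = qseq n j r i := by
  have hc : cseq n j s i = 0 := (cseq_mem hs).1.2 i (by omega)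
  simp only [point, Pi.add_apply, delta]
  rw [if_neg (by omega), hc]
  ring

lemma patOf_point {n j r s : ℕ} (hr : r < nrr n j) (hs : s < ncc n j) :
    patOf n j (point n j r s) = qseq n j r := by
  funext i
  simp only [patOf]
  by_cases h : j < (i : ℕ)
  · rw [if_pos h, point_gt hs h]
  · rw [if_neg h]
    exact ((qseq_mem hr).1 i (by omega)).symm

lemma preOf_point {n j r s : ℕ} (hr : r < nrr n j) (hs : s < ncc n j) :
    preOf n j (point n j r s) = cseq n j s := by
  funext i
  simp only [preOf]
  by_cases h : (i : ℕ) < j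
  · rw [if_pos h, point_lt hr h]
  · rw [if_neg h]
    exact ((cseq_mem hs).1.2 i (by omega)).symm

lemma point_mem_Box {n j r s : ℕ} (hr : r < nrr n j) (hs : s < ncc n j) :
    point n j r s ∈ Box n j := by
  intro i hi
  rw [point_lt hr hi]
  exact (cseq_mem hs).1.1 i hi

lemma cEq_point {n j r s : ℕ} (hr : r < nrr n j) (hs : s < ncc n j) :
    cEq (point n j r s) j 2 := fun i hi => point_eq hr hs hi

lemma point_mem_Stage {n j r s : ℕ} (hr : r < nrr n j) (hs : s < ncc n j) :
    point n j r s ∈ Stage n j r s := by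
  refine ⟨point_mem_Box hr hs, ?_⟩
  rintro ⟨-, hor⟩
  rw [patOf_point hr hs, preOf_point hr hs] at hor
  rcases hor with h | ⟨-, h⟩
  · exact (qseq_mem hr).2 h
  · exact (cseq_mem hs).2 h

lemma cEq_iff {n j : ℕ} (hj : j < n) (x : Pt n) (a : ZMod 3) :
    cEq x j a ↔ x ⟨j, hj⟩ = a := by
  constructor
  · intro h; exact h _ rfl
  · intro h i hi
    have : i = ⟨j, hj⟩ := Fin.ext hi
    rw [this]; exact h

lemma Cseq_succ (n j s : ℕ) :
    Cseq n j (s + 1) = insert (cseq n j s) (Cseq n j s) := rfl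

lemma Xseq_succ (n j r : ℕ) :
    Xseq n j (r + 1) = insert (qseq n j r) (Xseq n j r) := rfl

lemma stage_T1 {n j r s : ℕ} (hj : j < n) (hr : r < nrr n j) (hs : s < ncc n j) :
    Stage n j r s \ {point n j r s} = Stage n j r (s + 1) := by
  ext x
  simp only [Set.mem_diff, Set.mem_singleton_iff, Stage, Set.mem_setOf_eq, Cseq_succ,
    Set.mem_insert_iff]
  constructor
  · rintro ⟨⟨hbox, hnc⟩, hne⟩
    refine ⟨hbox, ?_⟩
    rintro ⟨hc2, hor⟩
    rcases hor with h | ⟨hpat, (hpre | hpre)⟩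
    · exact hnc ⟨hc2, Or.inl h⟩
    · -- pre x = cseq, pat x = qseq, x on slab: x = point
      apply hne
      funext i
      rcases lt_trichotomy (i : ℕ) j with h | h | h
      · have : x i = preOf n j x i := by simp only [preOf]; rw [if_pos h]
        rw [this, hpre, ← point_lt hr h]
      · rw [hc2 i h, point_eq hr hs h]
      · have : x i = patOf n j x i := by simp only [patOf]; rw [if_pos h]
        rw [this, hpat, ← point_gt hs h]
    · exact hnc ⟨hc2, Or.inr ⟨hpat, hpre⟩⟩
  · rintro ⟨hbox, hnc⟩
    refine ⟨⟨hbox, ?_⟩, ?_⟩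
    · rintro ⟨hc2, hor⟩
      rcases hor with h | ⟨hpat, hpre⟩
      · exact hnc ⟨hc2, Or.inl h⟩
      · exact hnc ⟨hc2, Or.inr ⟨hpat, Or.inr hpre⟩⟩
    · intro hxe
      apply hnc
      rw [hxe]
      exact ⟨cEq_point hr hs, Or.inr ⟨patOf_point hr hs, Or.inl (preOf_point hr hs)⟩⟩

lemma stage_T2 {n j r : ℕ} (hr : r < nrr n j) :
    Stage n j r (ncc n j) = Stage n j (r + 1) 0 := by
  ext x
  simp only [Stage, Set.mem_setOf_eq, Cseq_full, Xseq_succ, Set.mem_insert_iff]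
  constructor
  · rintro ⟨hbox, hnc⟩
    refine ⟨hbox, ?_⟩
    rintro ⟨hc2, hor⟩
    rcases hor with (h | h) | ⟨-, h⟩
    · exact hnc ⟨hc2, Or.inr ⟨h, preOf_mem_Pref hbox⟩⟩
    · exact hnc ⟨hc2, Or.inl h⟩
    · exact absurd h (Set.notMem_empty _)
  · rintro ⟨hbox, hnc⟩
    refine ⟨hbox, ?_⟩
    rintro ⟨hc2, hor⟩
    rcases hor with h | ⟨h, -⟩
    · exact hnc ⟨hc2, Or.inl (Or.inr h)⟩
    · exact hnc ⟨hc2, Or.inl (Or.inl h)⟩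

lemma box_succ {n j : ℕ} (hj : j < n) (x : Pt n) :
    x ∈ Box n (j + 1) ↔ x ∈ Box n j ∧ (x ⟨j, hj⟩ = 0 ∨ x ⟨j, hj⟩ = 1) := by
  constructor
  · intro h
    exact ⟨fun i hi => h i (by omega), h _ (by simp)⟩
  · rintro ⟨h1, h2⟩ i hi
    rcases Nat.lt_or_ge (i : ℕ) j with h | h
    · exact h1 i h
    · have : i = ⟨j, hj⟩ := Fin.ext (show (i : ℕ) = j by omega)
      rw [this]; exact h2

lemma stage_T3 {n j : ℕ} (hj : j < n) :
    Stage n j (nrr n j) 0 = Stage n (j + 1) 0 0 := by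
  have hz : ∀ a : ZMod 3, ¬ a = 2 ↔ (a = 0 ∨ a = 1) := by decide
  ext x
  simp only [Stage, Set.mem_setOf_eq, Xseq_full]
  constructor
  · rintro ⟨hbox, hnc⟩
    have hx2 : ¬ x ⟨j, hj⟩ = 2 := by
      intro h2
      exact hnc ⟨(cEq_iff hj x 2).mpr h2, Or.inl (patOf_mem_Pat n j x)⟩
    refine ⟨(box_succ hj x).mpr ⟨hbox, (hz _).mp hx2⟩, ?_⟩
    rintro ⟨-, (h | ⟨-, h⟩)⟩ <;> exact absurd h (Set.notMem_empty _)
  · rintro ⟨hbox, -⟩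
    obtain ⟨hb, hval⟩ := (box_succ hj x).mp hbox
    refine ⟨hb, ?_⟩
    rintro ⟨hc2, -⟩
    exact (hz _).mpr hval ((cEq_iff hj x 2).mp hc2)

lemma stage_init (n : ℕ) : Stage n 0 0 0 = Set.univ := by
  ext x
  simp only [Stage, Set.mem_setOf_eq, Set.mem_univ, iff_true]
  constructor
  · intro i hi; omega
  · rintro ⟨-, (h | ⟨-, h⟩)⟩ <;> exact absurd h (Set.notMem_empty _)

lemma stage_final (n : ℕ) :
    Stage n n 0 0 = {x : Pt n | ∀ i, x i = 0 ∨ x i = 1} := by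
  ext x
  simp only [Stage, Set.mem_setOf_eq]
  constructor
  · rintro ⟨hbox, -⟩ i
    exact hbox i i.isLt
  · intro h
    refine ⟨fun i _ => h i, ?_⟩
    rintro ⟨-, (h | ⟨-, h⟩)⟩ <;> exact absurd h (Set.notMem_empty _)

lemma mem_S_nonslab {n j r s : ℕ} {i₀ : Fin n} (hvi : (i₀ : ℕ) = j) {x : Pt n}
    (hb : x ∈ Box n j) (h2 : x i₀ ≠ 2) : x ∈ Stage n j r s := by
  refine ⟨hb, ?_⟩
  rintro ⟨hc2, -⟩
  exact h2 (hc2 i₀ hvi)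

lemma cEq_of_val {n j : ℕ} {i₀ : Fin n} (hvi : (i₀ : ℕ) = j) {x : Pt n} {a : ZMod 3}
    (h : x i₀ = a) : cEq x j a := by
  intro i hi
  have : i = i₀ := Fin.ext (by rw [hvi]; exact hi)
  rw [this]; exact h

lemma slab_mem_iff {n j r s : ℕ} {i₀ : Fin n} (hvi : (i₀ : ℕ) = j) {x : Pt n}
    (hb : x ∈ Box n j) (h2 : x i₀ = 2) :
    x ∈ Stage n j r s ↔
      ¬ (patOf n j x ∈ Xseq n j r ∨ (patOf n j x = qseq n j r ∧ preOf n j x ∈ Cseq n j s)) := by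
  constructor
  · exact fun hx hc => hx.2 ⟨cEq_of_val hvi h2, hc⟩
  · exact fun h => ⟨hb, fun hc => h hc.2⟩

lemma notin_S_of_pat {n j r s : ℕ} {i₀ : Fin n} (hvi : (i₀ : ℕ) = j) {x : Pt n}
    (h2 : x i₀ = 2) (hp : patOf n j x ∈ Xseq n j r) : x ∉ Stage n j r s := by
  intro hx
  exact hx.2 ⟨cEq_of_val hvi h2, Or.inl hp⟩

lemma patOf_add_pat {n j : ℕ} (x w : Pt n) (hw : w ∈ Pat n j) :
    patOf n j (x + w) = patOf n j x + w := by
  funext i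
  simp only [patOf, Pi.add_apply]
  by_cases h : j < (i : ℕ)
  · rw [if_pos h, if_pos h]
  · rw [if_neg h, if_neg h, hw i (by omega), add_zero]

lemma patOf_sub_pat {n j : ℕ} (x w : Pt n) (hw : w ∈ Pat n j) :
    patOf n j (x - w) = patOf n j x - w := by
  funext i
  simp only [patOf, Pi.sub_apply]
  by_cases h : j < (i : ℕ)
  · rw [if_pos h, if_pos h]
  · rw [if_neg h, if_neg h, hw i (by omega), sub_zero]

lemma preOf_add_pat {n j : ℕ} (x w : Pt n) (hw : w ∈ Pat n j) :
    preOf n j (x + w) = preOf n j x := by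
  funext i
  simp only [preOf, Pi.add_apply]
  by_cases h : (i : ℕ) < j
  · rw [if_pos h, if_pos h, hw i (by omega), add_zero]
  · rw [if_neg h, if_neg h]

lemma preOf_sub_pat {n j : ℕ} (x w : Pt n) (hw : w ∈ Pat n j) :
    preOf n j (x - w) = preOf n j x := by
  funext i
  simp only [preOf, Pi.sub_apply]
  by_cases h : (i : ℕ) < j
  · rw [if_pos h, if_pos h, hw i (by omega), sub_zero]
  · rw [if_neg h, if_neg h]

lemma box_add_pat {n j : ℕ} {x : Pt n} (hx : x ∈ Box n j) (w : Pt n) (hw : w ∈ Pat n j) :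
    x + w ∈ Box n j := by
  intro i hi
  have : (x + w) i = x i := by rw [Pi.add_apply, hw i (by omega), add_zero]
  rw [this]
  exact hx i hi

lemma box_sub_pat {n j : ℕ} {x : Pt n} (hx : x ∈ Box n j) (w : Pt n) (hw : w ∈ Pat n j) :
    x - w ∈ Box n j := by
  intro i hi
  have : (x - w) i = x i := by rw [Pi.sub_apply, hw i (by omega), sub_zero]
  rw [this]
  exact hx i hi

lemma split_card {α : Type*} (T : Set α) (hT : T.Finite) (p : α → Prop) :
    T.ncard = {v ∈ T | p v}.ncard + {v ∈ T | ¬ p v}.ncard := by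
  classical
  have hun : T = {v ∈ T | p v} ∪ {v ∈ T | ¬ p v} := by
    ext v
    by_cases h : p v <;> simp [h]
  have hdis : Disjoint {v ∈ T | p v} {v ∈ T | ¬ p v} := by
    rw [Set.disjoint_left]
    rintro v ⟨-, hv⟩ ⟨-, hv'⟩
    exact hv' hv
  rw [← Set.ncard_union_eq hdis (hT.subset (Set.sep_subset _ _)) (hT.subset (Set.sep_subset _ _)),
    ← hun]

def Wset (n j : ℕ) (i₀ : Fin n) : Set (Pt n) :=
  {v | v i₀ ≠ 0 ∧ ∀ i : Fin n, (i : ℕ) < j → v i = 0}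

lemma main_deg {n j r s : ℕ} (hj : j < n) (hr : r < nrr n j) (hs : s < ncc n j) :
    (Vdirs (Stage n j r s) (point n j r s)).Nonempty ∧
    ∀ P ∈ Stage n j r s,
      (Vdirs (Stage n j r s) P).ncard ≤ (Vdirs (Stage n j r s) (point n j r s)).ncard := by
  classical
  obtain ⟨i₀, hi₀⟩ : ∃ i : Fin n, (i : ℕ) = j := ⟨⟨j, hj⟩, rfl⟩
  have hQS : point n j r s ∈ Stage n j r s := point_mem_Stage hr hs
  have hQ2 : point n j r s i₀ = 2 := point_eq hr hs hi₀
  have hqPat : qseq n j r ∈ Pat n j := (qseq_mem hr).1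
  have hqX : qseq n j r ∉ Xseq n j r := (qseq_mem hr).2
  have hXsub : Xseq n j r ⊆ Pat n j := (Xseq_card r hr.le).1
  have hz1 : ∀ a b : ZMod 3, (a = 0 ∨ a = 1) → (a + b = 0 ∨ a + b = 1) →
      (a - b = 0 ∨ a - b = 1) → b = 0 := by decide
  have hz2 : ∀ a : ZMod 3, a ≠ 0 → 2 + a ≠ 2 := by decide
  have hz3 : ∀ a : ZMod 3, a ≠ 0 → 2 - a ≠ 2 := by decide
  have hz4 : ∀ a : ZMod 3, a ≠ 2 → 2 - a ≠ 0 := by decide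
  have hz5 : ∀ a : ZMod 3, a ≠ 2 → -(2 - a) ≠ 0 := by decide
  have hz6 : ∀ a : ZMod 3, 2 - a = -(2 - a) → a = 2 := by decide
  have hF1 : ∀ P ∈ Stage n j r s, ∀ v ∈ Vdirs (Stage n j r s) P,
      ∀ i : Fin n, (i : ℕ) < j → v i = 0 := by
    rintro P hP v ⟨hv0, hv1, hv2⟩ i hi
    exact hz1 (P i) (v i) (hP.1 i hi) (hv1.1 i hi) (hv2.1 i hi)
  have hWV : ∀ P ∈ Stage n j r s, P i₀ = 2 → (Wset n j i₀) ⊆ Vdirs (Stage n j r s) P := by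
    rintro P hPS hP2 v ⟨hvi, hvpre⟩
    have hv0 : v ≠ 0 := fun h => hvi (by rw [h]; rfl)
    have hb1 : P + v ∈ Box n j := fun i hi => by
      rw [Pi.add_apply, hvpre i hi, add_zero]; exact hPS.1 i hi
    have hb2 : P - v ∈ Box n j := fun i hi => by
      rw [Pi.sub_apply, hvpre i hi, sub_zero]; exact hPS.1 i hi
    refine ⟨hv0, ?_, ?_⟩
    · exact mem_S_nonslab hi₀ hb1 (by rw [Pi.add_apply, hP2]; exact hz2 _ hvi)
    · exact mem_S_nonslab hi₀ hb2 (by rw [Pi.sub_apply, hP2]; exact hz3 _ hvi)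
  have hWsubQ : (Wset n j i₀) ⊆ Vdirs (Stage n j r s) (point n j r s) := hWV _ hQS hQ2
  have hne : (Vdirs (Stage n j r s) (point n j r s)).Nonempty := by
    refine ⟨fun i => if i = i₀ then 1 else 0, hWsubQ ⟨?_, ?_⟩⟩
    · show (if i₀ = i₀ then (1 : ZMod 3) else 0) ≠ 0
      rw [if_pos rfl]; decide
    · intro i hi
      have hne' : i ≠ i₀ := by
        intro h
        rw [h, hi₀] at hi
        omega
      show (if i = i₀ then (1 : ZMod 3) else 0) = 0
      rw [if_neg hne']
  -- lower bounds for the chosen point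
  have hDQ : Dset n j (Xseq n j r) (qseq n j r) ⊆
      {v ∈ Vdirs (Stage n j r s) (point n j r s) | v i₀ = 0} := by
    rintro w ⟨⟨hw0, hwPat⟩, hw1, hw2⟩
    have hwi₀ : w i₀ = 0 := hwPat i₀ (le_of_eq hi₀)
    have hb1 : point n j r s + w ∈ Box n j := box_add_pat hQS.1 w hwPat
    have hb2 : point n j r s - w ∈ Box n j := box_sub_pat hQS.1 w hwPat
    have h21 : (point n j r s + w) i₀ = 2 := by rw [Pi.add_apply, hQ2, hwi₀, add_zero]
    have h22 : (point n j r s - w) i₀ = 2 := by rw [Pi.sub_apply, hQ2, hwi₀, sub_zero]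
    refine ⟨⟨hw0, ?_, ?_⟩, hwi₀⟩
    · rw [slab_mem_iff hi₀ hb1 h21, patOf_add_pat _ _ hwPat, patOf_point hr hs,
        preOf_add_pat _ _ hwPat, preOf_point hr hs]
      rintro (h | ⟨-, h⟩)
      · exact hw1 h
      · exact (cseq_mem hs).2 h
    · rw [slab_mem_iff hi₀ hb2 h22, patOf_sub_pat _ _ hwPat, patOf_point hr hs,
        preOf_sub_pat _ _ hwPat, preOf_point hr hs]
      rintro (h | ⟨-, h⟩)
      · exact hw2 h
      · exact (cseq_mem hs).2 h
  have hDQcard : (Dset n j (Xseq n j r) (qseq n j r)).ncard ≤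
      {v ∈ Vdirs (Stage n j r s) (point n j r s) | v i₀ = 0}.ncard :=
    Set.ncard_le_ncard hDQ (Set.toFinite _)
  have hWcard : (Wset n j i₀).ncard ≤ {v ∈ Vdirs (Stage n j r s) (point n j r s) | ¬ v i₀ = 0}.ncard := by
    refine Set.ncard_le_ncard ?_ (Set.toFinite _)
    intro v hv
    exact ⟨hWsubQ hv, hv.1⟩
  refine ⟨hne, ?_⟩
  intro P hPS
  have hsplitP : (Vdirs (Stage n j r s) P).ncard =
      {v ∈ Vdirs (Stage n j r s) P | v i₀ = 0}.ncard +
      {v ∈ Vdirs (Stage n j r s) P | ¬ v i₀ = 0}.ncard :=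
    split_card _ (Set.toFinite _) _
  have hsplitQ : (Vdirs (Stage n j r s) (point n j r s)).ncard =
      {v ∈ Vdirs (Stage n j r s) (point n j r s) | v i₀ = 0}.ncard +
      {v ∈ Vdirs (Stage n j r s) (point n j r s) | ¬ v i₀ = 0}.ncard :=
    split_card _ (Set.toFinite _) _
  have hBP_W : {v ∈ Vdirs (Stage n j r s) P | ¬ v i₀ = 0} ⊆ (Wset n j i₀) := by
    rintro v ⟨hv, hvi⟩
    exact ⟨hvi, fun i hi => hF1 P hPS v hv i hi⟩
  have hAPat : ∀ v ∈ Vdirs (Stage n j r s) P, v i₀ = 0 → v ∈ Pat n j := by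
    intro v hv hvi i hi
    by_cases h : (i : ℕ) < j
    · exact hF1 P hPS v hv i h
    · have : i = i₀ := Fin.ext ((le_antisymm hi (Nat.not_lt.mp h)).trans hi₀.symm)
      rw [this]; exact hvi
  by_cases hP2 : P i₀ = 2
  · -- slab case
    have hAP : {v ∈ Vdirs (Stage n j r s) P | v i₀ = 0} ⊆
        Dset n j (Xseq n j r) (patOf n j P) := by
      rintro v ⟨hv, hvi⟩
      have hvPat : v ∈ Pat n j := hAPat v hv hvi
      have hb1 : P + v ∈ Box n j := hv.2.1.1
      have hb2 : P - v ∈ Box n j := hv.2.2.1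
      have h21 : (P + v) i₀ = 2 := by rw [Pi.add_apply, hP2, hvi, add_zero]
      have h22 : (P - v) i₀ = 2 := by rw [Pi.sub_apply, hP2, hvi, sub_zero]
      refine ⟨⟨hv.1, hvPat⟩, ?_, ?_⟩
      · intro hmem
        exact (slab_mem_iff hi₀ hb1 h21).mp hv.2.1
          (Or.inl (by rwa [patOf_add_pat _ _ hvPat]))
      · intro hmem
        exact (slab_mem_iff hi₀ hb2 h22).mp hv.2.2
          (Or.inl (by rwa [patOf_sub_pat _ _ hvPat]))
    have hupat : patOf n j P ∈ Pat n j := patOf_mem_Pat n j P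
    have hupatX : patOf n j P ∉ Xseq n j r := by
      intro h
      exact notin_S_of_pat (s := s) (r := r) hi₀ hP2 h hPS
    have h1 : {v ∈ Vdirs (Stage n j r s) P | v i₀ = 0}.ncard ≤
        (Dset n j (Xseq n j r) (patOf n j P)).ncard :=
      Set.ncard_le_ncard hAP (Set.toFinite _)
    have h2 := qseq_max hr _ hupat hupatX
    have h3 : {v ∈ Vdirs (Stage n j r s) P | ¬ v i₀ = 0}.ncard ≤ (Wset n j i₀).ncard :=
      Set.ncard_le_ncard hBP_W (Set.toFinite _)
    linarith
  · -- off-slab case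
    have hAP : {v ∈ Vdirs (Stage n j r s) P | v i₀ = 0} ⊆ NZ n j := by
      rintro v ⟨hv, hvi⟩
      exact ⟨hv.1, hAPat v hv hvi⟩
    have hAPcard : {v ∈ Vdirs (Stage n j r s) P | v i₀ = 0}.ncard ≤ (NZ n j).ncard :=
      Set.ncard_le_ncard hAP (Set.toFinite _)
    -- NZ bound
    have hDsub : Dset n j (Xseq n j r) (qseq n j r) ⊆ NZ n j := fun w hw => hw.1
    have hcover : NZ n j \ Dset n j (Xseq n j r) (qseq n j r) ⊆
        (fun x => x - qseq n j r) '' Xseq n j r ∪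
          (fun x => qseq n j r - x) '' Xseq n j r := by
      rintro w ⟨hwNZ, hwD⟩
      by_cases h1 : qseq n j r + w ∈ Xseq n j r
      · exact Or.inl ⟨qseq n j r + w, h1, add_sub_cancel_left _ _⟩
      · by_cases h2 : qseq n j r - w ∈ Xseq n j r
        · exact Or.inr ⟨qseq n j r - w, h2, sub_sub_cancel _ _⟩
        · exact absurd ⟨hwNZ, h1, h2⟩ hwD
    have hcov1 : (NZ n j \ Dset n j (Xseq n j r) (qseq n j r)).ncard ≤
        (Xseq n j r).ncard + (Xseq n j r).ncard :=
      le_trans (Set.ncard_le_ncard hcover (Set.toFinite _))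
        (le_trans (Set.ncard_union_le _ _)
          (add_le_add (Set.ncard_image_le (Set.toFinite _))
            (Set.ncard_image_le (Set.toFinite _))))
    have hcov2 := Set.ncard_diff_add_ncard_of_subset hDsub (Set.toFinite _)
    -- (Wset n j i₀) bound
    have hgval : ∀ x ∈ Xseq n j r,
        (preOf n j P + delta n j + x) i₀ = 2 ∧
        (∀ i : Fin n, (i : ℕ) < j → (preOf n j P + delta n j + x) i = P i) ∧
        patOf n j (preOf n j P + delta n j + x) = x := by
      intro x hx
      have hxPat : x ∈ Pat n j := hXsub hx
      have hnotlt : ¬ ((i₀ : ℕ) < j) := by rw [hi₀]; exact lt_irrefl j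
      refine ⟨?_, ?_, ?_⟩
      · show preOf n j P i₀ + delta n j i₀ + x i₀ = 2
        have e1 : preOf n j P i₀ = 0 := if_neg hnotlt
        have e2 : delta n j i₀ = 2 := if_pos hi₀
        rw [e1, e2, hxPat i₀ (le_of_eq hi₀)]; ring
      · intro i hi
        show preOf n j P i + delta n j i + x i = P i
        have e1 : preOf n j P i = P i := if_pos hi
        have e2 : delta n j i = 0 := if_neg (fun he => absurd hi (by rw [he]; exact lt_irrefl j))
        rw [e1, e2, hxPat i (le_of_lt hi)]; ring
      · funext i
        simp only [patOf]
        by_cases h : j < (i : ℕ)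
        · rw [if_pos h]
          show preOf n j P i + delta n j i + x i = x i
          have e1 : preOf n j P i = 0 := if_neg (Nat.lt_asymm h)
          have e2 : delta n j i = 0 := if_neg (fun he => absurd h (by rw [he]; exact lt_irrefl j))
          rw [e1, e2]; ring
        · rw [if_neg h]
          exact (hxPat i (Nat.le_of_not_lt h)).symm
    have hynotS : ∀ x ∈ Xseq n j r, preOf n j P + delta n j + x ∉ Stage n j r s := by
      intro x hx
      exact notin_S_of_pat (s := s) hi₀ (hgval x hx).1 (by rw [(hgval x hx).2.2]; exact hx)
    set g : Pt n → Pt n := fun x => (preOf n j P + delta n j + x) - P with hgdef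
    have hgi₀ : ∀ x ∈ Xseq n j r, g x i₀ = 2 - P i₀ := by
      intro x hx
      show (preOf n j P + delta n j + x) i₀ - P i₀ = 2 - P i₀
      rw [(hgval x hx).1]
    have hgmem : ∀ x ∈ Xseq n j r,
        g x ∈ (Wset n j i₀) \ {v ∈ Vdirs (Stage n j r s) P | ¬ v i₀ = 0} ∧
        -(g x) ∈ (Wset n j i₀) \ {v ∈ Vdirs (Stage n j r s) P | ¬ v i₀ = 0} := by
      intro x hx
      have hpre : ∀ i : Fin n, (i : ℕ) < j → g x i = 0 := by
        intro i hi
        show (preOf n j P + delta n j + x) i - P i = 0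
        rw [(hgval x hx).2.1 i hi]; ring
      have hgW : g x ∈ (Wset n j i₀) := ⟨by rw [hgi₀ x hx]; exact hz4 _ hP2, hpre⟩
      have hgnotV : g x ∉ Vdirs (Stage n j r s) P := by
        rintro ⟨-, hv1, -⟩
        have : P + g x = preOf n j P + delta n j + x := by rw [hgdef]; ring
        rw [this] at hv1
        exact hynotS x hx hv1
      have hngW : -(g x) ∈ (Wset n j i₀) := by
        refine ⟨?_, fun i hi => by rw [Pi.neg_apply, hpre i hi, neg_zero]⟩
        rw [Pi.neg_apply, hgi₀ x hx]
        exact hz5 _ hP2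
      have hngnotV : -(g x) ∉ Vdirs (Stage n j r s) P := by
        rintro ⟨-, -, hv2⟩
        have : P - (-(g x)) = preOf n j P + delta n j + x := by rw [hgdef]; ring
        rw [this] at hv2
        exact hynotS x hx hv2
      exact ⟨⟨hgW, fun hc => hgnotV hc.1⟩, ⟨hngW, fun hc => hngnotV hc.1⟩⟩
    have hginj : Function.Injective g := by
      intro a b hab
      have h1 : preOf n j P + delta n j + a = preOf n j P + delta n j + b := by
        have := sub_left_inj.mp hab
        exact this
      exact add_left_cancel h1
    have hImsub : (g '' Xseq n j r) ∪ ((fun v => -v) '' (g '' Xseq n j r)) ⊆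
        (Wset n j i₀) \ {v ∈ Vdirs (Stage n j r s) P | ¬ v i₀ = 0} := by
      rintro v (⟨x, hx, rfl⟩ | ⟨w, ⟨x, hx, rfl⟩, rfl⟩)
      · exact (hgmem x hx).1
      · exact (hgmem x hx).2
    have hImdisj : Disjoint (g '' Xseq n j r) ((fun v => -v) '' (g '' Xseq n j r)) := by
      rw [Set.disjoint_left]
      rintro v ⟨a, ha, rfl⟩ ⟨w, ⟨b, hb, rfl⟩, hvb⟩
      have hvb' : -(g b) = g a := hvb
      have h1 : g a i₀ = 2 - P i₀ := hgi₀ a ha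
      have h2 : g a i₀ = -(2 - P i₀) := by
        rw [← hvb', Pi.neg_apply, hgi₀ b hb]
      exact hP2 (hz6 _ (h1.symm.trans h2))
    have hImcard : ((g '' Xseq n j r) ∪ ((fun v => -v) '' (g '' Xseq n j r))).ncard =
        2 * (Xseq n j r).ncard := by
      rw [Set.ncard_union_eq hImdisj (Set.toFinite _) (Set.toFinite _),
        Set.ncard_image_of_injective _ neg_injective,
        Set.ncard_image_of_injective _ hginj]
      ring
    have hWdiff : 2 * (Xseq n j r).ncard ≤
        ((Wset n j i₀) \ {v ∈ Vdirs (Stage n j r s) P | ¬ v i₀ = 0}).ncard := by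
      rw [← hImcard]
      exact Set.ncard_le_ncard hImsub (Set.toFinite _)
    have hWdecomp := Set.ncard_diff_add_ncard_of_subset hBP_W (Set.toFinite _)
    linarith

noncomputable def step (n : ℕ) : ℕ × ℕ × ℕ → ℕ × ℕ × ℕ
  | (j, r, s) =>
    if s + 1 < ncc n j then (j, r, s + 1)
    else if r + 1 < nrr n j then (j, r + 1, 0) else (j + 1, 0, 0)

noncomputable def stateAt (n : ℕ) : ℕ → ℕ × ℕ × ℕ
  | 0 => (0, 0, 0)
  | i + 1 => step n (stateAt n i)

noncomputable def Pfun (n : ℕ) (i : ℕ) : Pt n :=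
  point n (stateAt n i).1 (stateAt n i).2.1 (stateAt n i).2.2

noncomputable def offset (n j : ℕ) : ℕ := ∑ j' ∈ Finset.range j, ncc n j' * nrr n j'
noncomputable def kval (n : ℕ) : ℕ := offset n n

lemma offset_succ (n j : ℕ) : offset n (j + 1) = offset n j + ncc n j * nrr n j :=
  Finset.sum_range_succ _ _

lemma offset_le (n : ℕ) {j j' : ℕ} (h : j ≤ j') : offset n j ≤ offset n j' :=
  Finset.sum_le_sum_of_subset (Finset.range_subset_range.mpr h)

lemma idx_lt_kval {n j r s : ℕ} (hj : j < n) (hr : r < nrr n j) (hs : s < ncc n j) :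
    offset n j + r * ncc n j + s < kval n := by
  have h1 : (r + 1) * ncc n j ≤ nrr n j * ncc n j := Nat.mul_le_mul_right _ hr
  have e1 : (r + 1) * ncc n j = r * ncc n j + ncc n j := by ring
  have e2 : nrr n j * ncc n j = ncc n j * nrr n j := by ring
  have h2 := offset_succ n j
  have h3 : offset n (j + 1) ≤ offset n n := offset_le n hj
  show _ < offset n n
  omega

lemma invariant (n : ℕ) : ∀ i ≤ kval n, ∃ j r s, stateAt n i = (j, r, s) ∧
    offset n j + r * ncc n j + s = i ∧
    (j < n ∧ r < nrr n j ∧ s < ncc n j ∨ (j = n ∧ r = 0 ∧ s = 0)) ∧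
    greedySeq (Pfun n) i = Stage n j r s := by
  intro i
  induction i with
  | zero =>
    intro _
    refine ⟨0, 0, 0, rfl, by simp [offset], ?_, ?_⟩
    · by_cases h : 0 < n
      · exact Or.inl ⟨h, nrr_pos n 0, ncc_pos n 0⟩
      · exact Or.inr ⟨by omega, rfl, rfl⟩
    · rw [stage_init]
      rfl
  | succ i ih =>
    intro hik
    obtain ⟨j, r, s, hsteq, hidx, hval, hset⟩ := ih (Nat.le_of_succ_le hik)
    rcases hval with ⟨hj, hr, hs⟩ | ⟨hjn, hr0, hs0⟩
    · have hstep : stateAt n (i + 1) = step n (j, r, s) := by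
        show step n (stateAt n i) = _
        rw [hsteq]
      have hPfun : Pfun n i = point n j r s := by
        rw [Pfun, hsteq]
      have hseq : greedySeq (Pfun n) (i + 1) = Stage n j r (s + 1) := by
        show greedySeq (Pfun n) i \ {Pfun n i} = _
        rw [hset, hPfun, stage_T1 hj hr hs]
      by_cases h1 : s + 1 < ncc n j
      · refine ⟨j, r, s + 1, ?_, by omega, Or.inl ⟨hj, hr, h1⟩, hseq⟩
        rw [hstep]
        show (if s + 1 < ncc n j then (j, r, s + 1)
          else if r + 1 < nrr n j then (j, r + 1, 0) else (j + 1, 0, 0)) = _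
        rw [if_pos h1]
      · have hs1 : s + 1 = ncc n j := by omega
        have hseq2 : greedySeq (Pfun n) (i + 1) = Stage n j (r + 1) 0 := by
          rw [hseq, hs1, stage_T2 hr]
        by_cases h2 : r + 1 < nrr n j
        · refine ⟨j, r + 1, 0, ?_, ?_, Or.inl ⟨hj, h2, ncc_pos n j⟩, hseq2⟩
          · rw [hstep]
            show (if s + 1 < ncc n j then (j, r, s + 1)
              else if r + 1 < nrr n j then (j, r + 1, 0) else (j + 1, 0, 0)) = _
            rw [if_neg h1, if_pos h2]
          · have e1 : (r + 1) * ncc n j = r * ncc n j + ncc n j := by ring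
            omega
        · have hr1 : r + 1 = nrr n j := by omega
          have hseq3 : greedySeq (Pfun n) (i + 1) = Stage n (j + 1) 0 0 := by
            rw [hseq2, hr1, stage_T3 hj]
          refine ⟨j + 1, 0, 0, ?_, ?_, ?_, hseq3⟩
          · rw [hstep]
            show (if s + 1 < ncc n j then (j, r, s + 1)
              else if r + 1 < nrr n j then (j, r + 1, 0) else (j + 1, 0, 0)) = _
            rw [if_neg h1, if_neg h2]
          · have e1 : ncc n j * nrr n j = r * ncc n j + ncc n j := by
              rw [← hr1]; ring
            have e2 := offset_succ n j
            omega
          · by_cases h3 : j + 1 < n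
            · exact Or.inl ⟨h3, nrr_pos n (j + 1), ncc_pos n (j + 1)⟩
            · exact Or.inr ⟨by omega, rfl, rfl⟩
    · -- done state: contradiction with i + 1 ≤ kval n
      exfalso
      rw [hjn, hr0, hs0] at hidx
      have : offset n n = kval n := rfl
      omega

lemma capset_box (n : ℕ) : IsCapset {x : Pt n | ∀ i, x i = 0 ∨ x i = 1} := by
  rintro L ⟨p, v, hv, rfl⟩ hsub
  obtain ⟨i, hi⟩ : ∃ i, v i ≠ 0 := by
    by_contra h
    push_neg at h
    exact hv (funext h)
  have m0 : p ∈ {x : Pt n | ∀ i, x i = 0 ∨ x i = 1} := hsub ⟨0, by simp⟩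
  have m1 : p + v ∈ {x : Pt n | ∀ i, x i = 0 ∨ x i = 1} := hsub ⟨1, by rw [one_smul]⟩
  have m2 : p + (2 : ZMod 3) • v ∈ {x : Pt n | ∀ i, x i = 0 ∨ x i = 1} := hsub ⟨2, rfl⟩
  have hdec : ∀ a b : ZMod 3, b ≠ 0 → (a = 0 ∨ a = 1) → (a + b = 0 ∨ a + b = 1) →
      (a + 2 * b = 0 ∨ a + 2 * b = 1) → False := by decide
  exact hdec (p i) (v i) hi (m0 i) (m1 i) (m2 i)

end Greedy10

open Greedy10

/-- For every `n ≥ 1`, the set `{0,1}ⁿ ⊆ 𝔽₃ⁿ` of vectors all of whose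
coordinates are `0` or `1` is a greedy capset. -/
theorem greedy_capsets_stmt10 {n : ℕ} (hn : 1 ≤ n) :
    IsGreedyCapset {x : Fin n → ZMod 3 | ∀ i, x i = 0 ∨ x i = 1} := by
  classical
  refine ⟨kval n, Pfun n, ?_, ?_, capset_box n⟩
  · intro i hik
    obtain ⟨j, r, s, hsteq, hidx, hval, hset⟩ := invariant n i (le_of_lt hik)
    rcases hval with ⟨hj, hr, hs⟩ | ⟨hjn, hr0, hs0⟩
    · have hPfun : Pfun n i = point n j r s := by
        rw [Pfun, hsteq]
      obtain ⟨hne, hmax⟩ := main_deg hj hr hs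
      have hQS := point_mem_Stage (n := n) hr hs
      have hdeg := vdirs_card (S := Stage n j r s) hQS
      have hpos : 0 < (Vdirs (Stage n j r s) (point n j r s)).ncard :=
        (Set.ncard_pos (Set.toFinite _)).mpr hne
      refine ⟨?_, ?_, ?_⟩
      · rw [hPfun, hset]
        exact hQS
      · rw [hPfun, hset]
        omega
      · rw [hPfun, hset]
        intro Q hQ
        have h1 := vdirs_card (S := Stage n j r s) hQ
        have h2 := hmax Q hQ
        omega
    · exfalso
      rw [hjn, hr0, hs0] at hidx
      have hk : kval n = offset n n := rfl
      omega
  · obtain ⟨j, r, s, hsteq, hidx, hval, hset⟩ := invariant n (kval n) le_rfl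
    rcases hval with ⟨hj, hr, hs⟩ | ⟨hjn, hr0, hs0⟩
    · exfalso
      have := idx_lt_kval hj hr hs
      omega
    · rw [hjn, hr0, hs0] at hset
      rw [hset, stage_final]
end
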